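/- arXiv:2405.05713 — 16 statements merged into one kernel-verified Lean document; each statement's English description precedes it below -/
import Mathlib

section
/- Let d ≥ 1, l > 0, b > 0 and 0 < μ < b. Let f : EuclideanSpace ℝ (Fin d) → ℝ be differentiable on the closed ball of radius b centered at 0, and suppose the gradient of f is l-Lipschitz on this ball, i.e. ‖∇f(s) − ∇f(t)‖ ≤ l‖s − t‖ for all s, t in the ball. Then for every s with ‖s‖ ≤ b − μ, the coordinate-wise zeroth-order estimator satisfies ‖g(s; μ) − ∇f(s)‖ ≤ l·μ·√d / 2. -/
open Metric

/-- The coordinate-wise zeroth-order gradient estimator with smoothing parameter `μ`. -/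
noncomputable def zoEstimator {d : ℕ} (f : EuclideanSpace ℝ (Fin d) → ℝ) (μ : ℝ)
    (s : EuclideanSpace ℝ (Fin d)) : EuclideanSpace ℝ (Fin d) :=
  ∑ i : Fin d,
    ((f (s + μ • EuclideanSpace.single i (1 : ℝ)) -
        f (s - μ • EuclideanSpace.single i (1 : ℝ))) / (2 * μ)) •
      EuclideanSpace.single i (1 : ℝ)

/-- Taylor-type bound: for `f` differentiable on the closed ball with `l`-Lipschitz
gradient, `|f y - f x - ⟪∇f x, y - x⟫| ≤ l/2 ‖y - x‖²` when `x` is interior. -/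
lemma taylor_aux {d : ℕ} (l b : ℝ) (hl : 0 ≤ l)
    (f : EuclideanSpace ℝ (Fin d) → ℝ)
    (hdiff : DifferentiableOn ℝ f (closedBall (0 : EuclideanSpace ℝ (Fin d)) b))
    (hlip : ∀ s ∈ closedBall (0 : EuclideanSpace ℝ (Fin d)) b,
        ∀ t ∈ closedBall (0 : EuclideanSpace ℝ (Fin d)) b,
        ‖gradient f s - gradient f t‖ ≤ l * ‖s - t‖)
    (x y : EuclideanSpace ℝ (Fin d)) (hx : ‖x‖ < b) (hy : ‖y‖ ≤ b) :
    |f y - f x - inner ℝ (gradient f x) (y - x)| ≤ l / 2 * ‖y - x‖ ^ 2 := by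
  set v : EuclideanSpace ℝ (Fin d) := y - x with hv
  set γ : ℝ → EuclideanSpace ℝ (Fin d) := fun t => x + t • v with hγ
  have hγ01 : ∀ t, γ t = (1 - t) • x + t • y := by
    intro t
    simp only [hγ, hv, smul_sub, sub_smul, one_smul]
    abel
  have hγle : ∀ t ∈ Set.Icc (0 : ℝ) 1, ‖γ t‖ ≤ b := by
    intro t ht
    rw [hγ01]
    calc ‖(1 - t) • x + t • y‖ ≤ ‖(1 - t) • x‖ + ‖t • y‖ := norm_add_le _ _
      _ = (1 - t) * ‖x‖ + t * ‖y‖ := by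
          rw [norm_smul, norm_smul, Real.norm_eq_abs, Real.norm_eq_abs,
            abs_of_nonneg (by linarith [ht.2]), abs_of_nonneg ht.1]
      _ ≤ (1 - t) * b + t * b := by
          have h1 : (0:ℝ) ≤ 1 - t := by linarith [ht.2]
          exact add_le_add (mul_le_mul_of_nonneg_left hx.le h1)
            (mul_le_mul_of_nonneg_left hy ht.1)
      _ = b := by ring
  have hγlt : ∀ t ∈ Set.Ico (0 : ℝ) 1, ‖γ t‖ < b := by
    intro t ht
    rw [hγ01]
    calc ‖(1 - t) • x + t • y‖ ≤ (1 - t) * ‖x‖ + t * ‖y‖ := by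
          refine (norm_add_le _ _).trans (le_of_eq ?_)
          rw [norm_smul, norm_smul, Real.norm_eq_abs, Real.norm_eq_abs,
            abs_of_nonneg (by linarith [ht.2.le]), abs_of_nonneg ht.1]
      _ < (1 - t) * b + t * b := by
          have h1 : (0:ℝ) < 1 - t := by linarith [ht.2]
          have := mul_lt_mul_of_pos_left hx h1
          have h2 := mul_le_mul_of_nonneg_left hy ht.1
          linarith
      _ = b := by ring
  set c : ℝ := inner ℝ (gradient f x) v with hc
  set F : ℝ → ℝ := fun t => f (γ t) - f x - t * c with hF
  have hγcont : Continuous γ := by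
    apply continuous_const.add (continuous_id.smul continuous_const)
  have hγderiv : ∀ t : ℝ, HasDerivAt γ v t := by
    intro t
    simpa [hγ] using ((hasDerivAt_id t).smul_const v).const_add x
  have hFderiv : ∀ t ∈ Set.Ico (0 : ℝ) 1,
      HasDerivAt F (inner ℝ (gradient f (γ t)) v - c) t := by
    intro t ht
    have hmem : γ t ∈ ball (0 : EuclideanSpace ℝ (Fin d)) b :=
      mem_ball_zero_iff.2 (hγlt t ht)
    have hfd : DifferentiableAt ℝ f (γ t) :=
      hdiff.differentiableAt (mem_nhds_iff.2
        ⟨ball 0 b, ball_subset_closedBall, isOpen_ball, hmem⟩)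
    have hgr := hfd.hasGradientAt
    have hFd : HasFDerivAt f ((InnerProductSpace.toDual ℝ _) (gradient f (γ t))) (γ t) :=
      hasGradientAt_iff_hasFDerivAt.1 hgr
    have hcomp := hFd.comp_hasDerivAt t (hγderiv t)
    have hcomp' : HasDerivAt (fun t => f (γ t)) (inner ℝ (gradient f (γ t)) v) t := by
      exact hcomp
    have : HasDerivAt (fun t : ℝ => t * c) c t := by
      simpa using (hasDerivAt_id t).mul_const c
    exact (hcomp'.sub_const (f x)).sub this
  have hFcont : ContinuousOn F (Set.Icc (0 : ℝ) 1) := by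
    apply ContinuousOn.sub
    · apply ContinuousOn.sub
      · exact hdiff.continuousOn.comp hγcont.continuousOn
          (fun t ht => mem_closedBall_zero_iff.2 (hγle t ht))
      · exact continuousOn_const
    · exact (continuous_id.mul continuous_const).continuousOn
  set B : ℝ → ℝ := fun t => l * ‖v‖ ^ 2 / 2 * t ^ 2 with hB
  have hBderiv : ∀ t : ℝ, HasDerivAt B (l * ‖v‖ ^ 2 * t) t := by
    intro t
    have := (hasDerivAt_pow 2 t).const_mul (l * ‖v‖ ^ 2 / 2)
    exact this.congr_deriv (by rw [show (2:ℕ) - 1 = 1 from rfl]; push_cast; ring)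
  have hbound : ∀ t ∈ Set.Ico (0 : ℝ) 1,
      ‖inner ℝ (gradient f (γ t)) v - c‖ ≤ l * ‖v‖ ^ 2 * t := by
    intro t ht
    have h1 : inner ℝ (gradient f (γ t)) v - c
        = inner ℝ (gradient f (γ t) - gradient f x) v := by
      rw [hc, inner_sub_left]
    rw [h1]
    calc ‖(inner ℝ (gradient f (γ t) - gradient f x) v : ℝ)‖
        ≤ ‖gradient f (γ t) - gradient f x‖ * ‖v‖ := norm_inner_le_norm _ _
      _ ≤ (l * ‖γ t - x‖) * ‖v‖ := by
          apply mul_le_mul_of_nonneg_right _ (norm_nonneg v)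
          exact hlip _ (mem_closedBall_zero_iff.2 (hγle t ⟨ht.1, ht.2.le⟩)) _
            (mem_closedBall_zero_iff.2 hx.le)
      _ = l * ‖v‖ ^ 2 * t := by
          have : γ t - x = t • v := by simp [hγ]
          rw [this, norm_smul, Real.norm_eq_abs, abs_of_nonneg ht.1]
          ring
  have hkey := image_norm_le_of_norm_deriv_right_le_deriv_boundary hFcont
    (fun t ht => (hFderiv t ht).hasDerivWithinAt)
    (by simp [hF, hB, hγ] : ‖F 0‖ ≤ B 0) hBderiv
    (fun t ht => hbound t ht)
  have h1 := hkey (Set.right_mem_Icc.2 zero_le_one)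
  have hγ1 : γ 1 = y := by simp [hγ, hv]
  have hF1 : F 1 = f y - f x - inner ℝ (gradient f x) (y - x) := by
    simp [hF, hγ1, hc, hv]
  have hB1 : B 1 = l / 2 * ‖y - x‖ ^ 2 := by
    simp only [hB, hv, one_pow, mul_one]; ring
  rw [Real.norm_eq_abs, hF1, hB1] at h1
  exact h1

/-- Approximation error of the coordinate-wise zeroth-order estimator under
gradient Lipschitz continuity. -/
theorem zo_estimator_error_grad_lipschitz {d : ℕ} (hd : 1 ≤ d) (l b μ : ℝ)
    (hl : 0 < l) (hb : 0 < b) (hμ : 0 < μ) (hμb : μ < b)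
    (f : EuclideanSpace ℝ (Fin d) → ℝ)
    (hdiff : DifferentiableOn ℝ f (closedBall (0 : EuclideanSpace ℝ (Fin d)) b))
    (hlip : ∀ s ∈ closedBall (0 : EuclideanSpace ℝ (Fin d)) b,
        ∀ t ∈ closedBall (0 : EuclideanSpace ℝ (Fin d)) b,
        ‖gradient f s - gradient f t‖ ≤ l * ‖s - t‖)
    (s : EuclideanSpace ℝ (Fin d)) (hs : ‖s‖ ≤ b - μ) :
    ‖zoEstimator f μ s - gradient f s‖ ≤ l * μ * Real.sqrt d / 2 := by
  have hsb : ‖s‖ < b := lt_of_le_of_lt hs (by linarith)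
  -- coordinate-wise bound
  have key : ∀ i : Fin d,
      |(f (s + μ • EuclideanSpace.single i (1 : ℝ)) -
          f (s - μ • EuclideanSpace.single i (1 : ℝ))) / (2 * μ) -
        gradient f s i| ≤ l * μ / 2 := by
    intro i
    set e : EuclideanSpace ℝ (Fin d) := EuclideanSpace.single i (1 : ℝ) with he
    have hne : ‖e‖ = 1 := by simp [he]
    have hplus : ‖s + μ • e‖ ≤ b := by
      calc ‖s + μ • e‖ ≤ ‖s‖ + ‖μ • e‖ := norm_add_le _ _
        _ ≤ (b - μ) + μ := by
            rw [norm_smul, hne, Real.norm_eq_abs, abs_of_pos hμ]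
            linarith
        _ = b := by ring
    have hminus : ‖s - μ • e‖ ≤ b := by
      calc ‖s - μ • e‖ ≤ ‖s‖ + ‖μ • e‖ := norm_sub_le _ _
        _ ≤ (b - μ) + μ := by
            rw [norm_smul, hne, Real.norm_eq_abs, abs_of_pos hμ]
            linarith
        _ = b := by ring
    have h1 := taylor_aux l b hl.le f hdiff hlip s (s + μ • e) hsb hplus
    have h2 := taylor_aux l b hl.le f hdiff hlip s (s - μ • e) hsb hminus
    have hie : (inner ℝ (gradient f s) e : ℝ) = gradient f s i := by
      rw [he, EuclideanSpace.inner_single_right]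
      simp
    have hd1 : s + μ • e - s = μ • e := by abel
    have hd2 : s - μ • e - s = -(μ • e) := by abel
    rw [hd1] at h1
    rw [hd2] at h2
    have hn : ‖μ • e‖ = μ := by
      rw [norm_smul, hne, Real.norm_eq_abs, abs_of_pos hμ]; ring
    rw [inner_smul_right, hie, hn] at h1
    rw [inner_neg_right, inner_smul_right, hie, norm_neg, hn] at h2
    set A := f (s + μ • e) - f s - μ * gradient f s i with hA
    set C := f (s - μ • e) - f s - -(μ * gradient f s i) with hC
    have habs : |A - C| ≤ l * μ ^ 2 := by
      calc |A - C| ≤ |A| + |C| := abs_sub _ _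
        _ ≤ l / 2 * μ ^ 2 + l / 2 * μ ^ 2 := add_le_add h1 h2
        _ = l * μ ^ 2 := by ring
    have hAC : A - C = f (s + μ • e) - f (s - μ • e) - 2 * μ * gradient f s i := by
      rw [hA, hC]; ring
    rw [hAC] at habs
    have h2μ : (0:ℝ) < 2 * μ := by linarith
    rw [div_sub' (ne_of_gt h2μ), abs_div, abs_of_pos h2μ,
      div_le_iff₀ h2μ]
    calc |f (s + μ • e) - f (s - μ • e) - 2 * μ * gradient f s i|
        ≤ l * μ ^ 2 := habs
      _ = l * μ / 2 * (2 * μ) := by ring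
  -- assemble
  set v := zoEstimator f μ s - gradient f s with hvdef
  have hvi : ∀ i : Fin d,
      v i = (f (s + μ • EuclideanSpace.single i (1 : ℝ)) -
          f (s - μ • EuclideanSpace.single i (1 : ℝ))) / (2 * μ) -
        gradient f s i := by
    intro i
    have : zoEstimator f μ s i = (f (s + μ • EuclideanSpace.single i (1 : ℝ)) -
          f (s - μ • EuclideanSpace.single i (1 : ℝ))) / (2 * μ) := by
      simp only [zoEstimator]
      rw [WithLp.ofLp_sum, Finset.sum_apply]
      rw [Finset.sum_eq_single i]
      · simp [EuclideanSpace.single_apply]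
      · intro j _ hj
        simp [EuclideanSpace.single_apply, Ne.symm hj]
      · simp
    simp only [hvdef, PiLp.sub_apply, this]
  have hnormsq : ‖v‖ = Real.sqrt (∑ i : Fin d, v i ^ 2) := by
    rw [EuclideanSpace.norm_eq]
    congr 1
    exact Finset.sum_congr rfl fun i _ => by rw [Real.norm_eq_abs, sq_abs]
  rw [hnormsq]
  have hsum : ∑ i : Fin d, v i ^ 2 ≤ d * (l * μ / 2) ^ 2 := by
    calc ∑ i : Fin d, v i ^ 2 ≤ ∑ _i : Fin d, (l * μ / 2) ^ 2 := by
          apply Finset.sum_le_sum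
          intro i _
          have := key i
          rw [← hvi i] at this
          calc v i ^ 2 = |v i| ^ 2 := (sq_abs _).symm
            _ ≤ (l * μ / 2) ^ 2 := by
                apply pow_le_pow_left₀ (abs_nonneg _) this
      _ = d * (l * μ / 2) ^ 2 := by
          rw [Finset.sum_const, Finset.card_univ, Fintype.card_fin, nsmul_eq_mul]
  calc Real.sqrt (∑ i : Fin d, v i ^ 2) ≤ Real.sqrt (d * (l * μ / 2) ^ 2) :=
        Real.sqrt_le_sqrt hsum
    _ = Real.sqrt d * (l * μ / 2) := by
        rw [Real.sqrt_mul (Nat.cast_nonneg d), Real.sqrt_sq (by positivity)]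
    _ = l * μ * Real.sqrt d / 2 := by ring
end

section
/- Let d ≥ 1, ρ > 0, b > 0 and 0 < μ < b. Let f : EuclideanSpace ℝ (Fin d) → ℝ be twice differentiable on the closed ball of radius b centered at 0, and suppose the Hessian of f is ρ-Lipschitz on this ball, i.e. ‖∇²f(s) − ∇²f(t)‖ ≤ ρ‖s − t‖ in operator norm for all s, t in the ball. Then for every s with ‖s‖ ≤ b − μ, the coordinate-wise zeroth-order estimator satisfies ‖g(s; μ) − ∇f(s)‖ ≤ ρ·μ²·√d / 6. -/
open Metric Set

/-- One-sided quadratic mean value bound. -/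
lemma aux_sq {a ρ : ℝ} (ha : 0 ≤ a) (g g' : ℝ → ℝ)
    (hg : ∀ u ∈ Icc 0 a, HasDerivAt g (g' u) u)
    (h0 : g 0 = 0) (hb : ∀ u ∈ Icc 0 a, |g' u| ≤ ρ * u) :
    |g a| ≤ ρ * a ^ 2 / 2 := by
  have hB : ∀ x : ℝ, HasDerivAt (fun y : ℝ => ρ * y ^ 2 / 2) (ρ * x) x := by
    intro x
    have h := ((hasDerivAt_pow 2 x).const_mul ρ).div_const 2
    refine h.congr_deriv ?_
    ring
  have := image_norm_le_of_norm_deriv_right_le_deriv_boundary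
    (f := g) (f' := g') (a := 0) (b := a)
    (fun u hu => ((hg u hu).continuousAt).continuousWithinAt)
    (fun u hu => (hg u (Ico_subset_Icc_self hu)).hasDerivWithinAt)
    (B := fun y => ρ * y ^ 2 / 2) (B' := fun y => ρ * y)
    (by simp [h0]) hB
    (fun u hu => by simpa [Real.norm_eq_abs] using hb u (Ico_subset_Icc_self hu))
  simpa [Real.norm_eq_abs] using this (right_mem_Icc.2 ha)

/-- Two-sided Taylor-type bound from a Lipschitz estimate on the second derivative. -/
lemma aux_two {μ ρ t : ℝ} (ht : t ∈ Ioo (-μ) μ) (φ' φ'' : ℝ → ℝ)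
    (hd : ∀ u ∈ Ioo (-μ) μ, HasDerivAt φ' (φ'' u) u)
    (hlip : ∀ u ∈ Ioo (-μ) μ, |φ'' u - φ'' 0| ≤ ρ * |u|) :
    |φ' t - φ' 0 - t * φ'' 0| ≤ ρ * t ^ 2 / 2 := by
  obtain ⟨ht1, ht2⟩ := ht
  have h0 : (0 : ℝ) ∈ Ioo (-μ) μ := by constructor <;> nlinarith
  rcases le_total 0 t with hts | hts
  · exact aux_sq hts (fun u => φ' u - φ' 0 - u * φ'' 0) (fun u => φ'' u - φ'' 0)
      (fun u hu => by
        have hu' : u ∈ Ioo (-μ) μ := ⟨by nlinarith [hu.1, hu.2], lt_of_le_of_lt hu.2 ht2⟩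
        exact ((hd u hu').sub_const (φ' 0)).sub (hasDerivAt_mul_const (φ'' 0)))
      (by ring)
      (fun u hu => by
        have hu' : u ∈ Ioo (-μ) μ := ⟨by nlinarith [hu.1, hu.2], lt_of_le_of_lt hu.2 ht2⟩
        calc |φ'' u - φ'' 0| ≤ ρ * |u| := hlip u hu'
          _ = ρ * u := by rw [abs_of_nonneg hu.1])
  · have hmem : ∀ u ∈ Icc 0 (-t), -u ∈ Ioo (-μ) μ := by
      intro u hu
      constructor
      · nlinarith [hu.1, hu.2]
      · nlinarith [hu.1, hu.2, h0.2]
    have key := aux_sq (by linarith : (0:ℝ) ≤ -t)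
      (fun u => φ' (-u) - φ' 0 + u * φ'' 0) (fun u => -(φ'' (-u)) + φ'' 0)
      (fun u hu => by
        have h1 : HasDerivAt (fun u : ℝ => φ' (-u)) (φ'' (-u) * (-1)) u :=
          (hd (-u) (hmem u hu)).comp u (hasDerivAt_neg u)
        have := (h1.sub_const (φ' 0)).add (hasDerivAt_mul_const (φ'' 0))
        refine this.congr_deriv ?_
        ring)
      (by ring)
      (fun u hu => by
        have := hlip (-u) (hmem u hu)
        rw [abs_neg, abs_of_nonneg hu.1] at this
        calc |(-(φ'' (-u)) + φ'' 0)| = |φ'' (-u) - φ'' 0| := by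
              rw [← abs_neg]; ring_nf
          _ ≤ ρ * u := this)
    calc |φ' t - φ' 0 - t * φ'' 0|
        = |φ' (-(-t)) - φ' 0 + (-t) * φ'' 0| := by ring_nf
      _ ≤ ρ * (-t) ^ 2 / 2 := key
      _ = ρ * t ^ 2 / 2 := by ring

/-- Approximation error of the coordinate-wise zeroth-order estimator under
Hessian Lipschitz continuity.  The Hessian of `f` at `s` is the derivative
`fderiv ℝ (gradient f) s` of the gradient vector field. -/
theorem zo_estimator_error_hess_lipschitz {d : ℕ} (hd : 1 ≤ d) (ρ b μ : ℝ)
    (hρ : 0 < ρ) (hb : 0 < b) (hμ : 0 < μ) (hμb : μ < b)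
    (f : EuclideanSpace ℝ (Fin d) → ℝ)
    (hdiff : DifferentiableOn ℝ f (closedBall (0 : EuclideanSpace ℝ (Fin d)) b))
    (hdiff2 : DifferentiableOn ℝ (gradient f) (closedBall (0 : EuclideanSpace ℝ (Fin d)) b))
    (hlip : ∀ s ∈ closedBall (0 : EuclideanSpace ℝ (Fin d)) b,
        ∀ t ∈ closedBall (0 : EuclideanSpace ℝ (Fin d)) b,
        ‖fderiv ℝ (gradient f) s - fderiv ℝ (gradient f) t‖ ≤ ρ * ‖s - t‖)
    (s : EuclideanSpace ℝ (Fin d)) (hs : ‖s‖ ≤ b - μ) :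
    ‖zoEstimator f μ s - gradient f s‖ ≤ ρ * μ ^ 2 * Real.sqrt d / 6 := by
  set K : ℝ := ρ * μ ^ 2 / 6 with hK
  have hK0 : 0 ≤ K := by positivity
  -- Per-coordinate bound
  have hcoord : ∀ j : Fin d, |(zoEstimator f μ s - gradient f s) j| ≤ K := by
    intro j
    set e : EuclideanSpace ℝ (Fin d) := EuclideanSpace.single j (1 : ℝ) with he
    have hnorme : ‖e‖ = 1 := by rw [he, EuclideanSpace.norm_single]; exact norm_one
    set c : ℝ → EuclideanSpace ℝ (Fin d) := fun t => s + t • e with hc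
    -- membership facts
    have hmem : ∀ t : ℝ, |t| ≤ μ → c t ∈ closedBall (0 : EuclideanSpace ℝ (Fin d)) b := by
      intro t ht
      rw [mem_closedBall_zero_iff]
      calc ‖s + t • e‖ ≤ ‖s‖ + ‖t • e‖ := norm_add_le _ _
        _ = ‖s‖ + |t| := by rw [norm_smul, hnorme, Real.norm_eq_abs, mul_one]
        _ ≤ (b - μ) + μ := add_le_add hs ht
        _ = b := by ring
    have hnhds : ∀ t : ℝ, |t| < μ → closedBall (0 : EuclideanSpace ℝ (Fin d)) b ∈ nhds (c t) := by
      intro t ht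
      apply Filter.mem_of_superset (isOpen_ball.mem_nhds ?_) ball_subset_closedBall
      rw [mem_ball_zero_iff]
      calc ‖s + t • e‖ ≤ ‖s‖ + ‖t • e‖ := norm_add_le _ _
        _ = ‖s‖ + |t| := by rw [norm_smul, hnorme, Real.norm_eq_abs, mul_one]
        _ < (b - μ) + μ := by apply add_lt_add_of_le_of_lt hs ht
        _ = b := by ring
    have hfd : ∀ t : ℝ, |t| < μ → DifferentiableAt ℝ f (c t) :=
      fun t ht => hdiff.differentiableAt (hnhds t ht)
    have hgd : ∀ t : ℝ, |t| < μ → DifferentiableAt ℝ (gradient f) (c t) :=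
      fun t ht => hdiff2.differentiableAt (hnhds t ht)
    have hcd : ∀ t : ℝ, HasDerivAt c e t := by
      intro t
      have h1 : HasDerivAt (fun t : ℝ => t • e) ((1 : ℝ) • e) t :=
        (hasDerivAt_id t).smul_const e
      rw [one_smul] at h1
      exact h1.const_add s
    have hc0 : c 0 = s := by simp [hc]
    -- first derivative along the line
    set φ' : ℝ → ℝ := fun t => (inner ℝ (gradient f (c t)) e : ℝ) with hφ'
    have hφd : ∀ t : ℝ, |t| < μ → HasDerivAt (fun u => f (c u)) (φ' t) t := by
      intro t ht
      have h1 := ((hfd t ht).hasGradientAt.hasFDerivAt).comp_hasDerivAt t (hcd t)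
      refine h1.congr_deriv ?_
      simp [hφ', InnerProductSpace.toDual_apply_apply]
    -- second derivative along the line
    set φ'' : ℝ → ℝ := fun t => (inner ℝ ((fderiv ℝ (gradient f) (c t)) e) e : ℝ) with hφ''
    have hφ'd : ∀ t : ℝ, |t| < μ → HasDerivAt φ' (φ'' t) t := by
      intro t ht
      have h1 : HasDerivAt (fun u => gradient f (c u)) ((fderiv ℝ (gradient f) (c t)) e) t :=
        ((hgd t ht).hasFDerivAt).comp_hasDerivAt t (hcd t)
      have h2 := HasDerivAt.inner ℝ h1 (hasDerivAt_const t e)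
      simpa [hφ'] using h2
    -- Lipschitz bound on φ''
    have hlipφ : ∀ u ∈ Ioo (-μ) μ, |φ'' u - φ'' 0| ≤ ρ * |u| := by
      intro u hu
      have hu' : |u| < μ := abs_lt.2 hu
      have hdiffop := hlip (c u) (hmem u hu'.le) (c 0) (hmem 0 (by simp [hμ.le]))
      have hval : φ'' u - φ'' 0
          = (inner ℝ ((fderiv ℝ (gradient f) (c u) - fderiv ℝ (gradient f) (c 0)) e) e : ℝ) := by
        simp [hφ'', ContinuousLinearMap.sub_apply, inner_sub_left]
      rw [hval]
      calc |(inner ℝ ((fderiv ℝ (gradient f) (c u) - fderiv ℝ (gradient f) (c 0)) e) e : ℝ)|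
          ≤ ‖(fderiv ℝ (gradient f) (c u) - fderiv ℝ (gradient f) (c 0)) e‖ * ‖e‖ :=
            abs_real_inner_le_norm _ _
        _ ≤ ‖fderiv ℝ (gradient f) (c u) - fderiv ℝ (gradient f) (c 0)‖ * ‖e‖ * ‖e‖ := by
            apply mul_le_mul_of_nonneg_right (ContinuousLinearMap.le_opNorm _ _) (norm_nonneg _)
        _ = ‖fderiv ℝ (gradient f) (c u) - fderiv ℝ (gradient f) (c 0)‖ := by
            rw [hnorme]; ring
        _ ≤ ρ * ‖c u - c 0‖ := hdiffop
        _ = ρ * |u| := by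
            congr 1
            simp only [hc, add_sub_add_left_eq_sub, zero_smul, sub_zero]
            rw [norm_smul, hnorme, Real.norm_eq_abs, mul_one]
    -- derivative facts in Ioo form
    have hφ'dIoo : ∀ u ∈ Ioo (-μ) μ, HasDerivAt φ' (φ'' u) u :=
      fun u hu => hφ'd u (abs_lt.2 hu)
    -- the symmetric difference bound via the fencing lemma
    set ψ : ℝ → ℝ := fun t => f (c t) - f (c (-t)) - 2 * t * φ' 0 with hψ
    have hΦc : ContinuousOn (fun t => f (c t)) (Icc (-μ) μ) := by
      apply (hdiff.continuousOn).comp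
      · exact (continuous_const.add (continuous_id.smul continuous_const)).continuousOn
      · intro t ht
        exact hmem t (abs_le.2 ⟨ht.1, ht.2⟩)
    have hψc : ContinuousOn ψ (Icc 0 μ) := by
      apply ContinuousOn.sub
      apply ContinuousOn.sub
      · exact hΦc.mono (Icc_subset_Icc (by linarith) le_rfl)
      · apply hΦc.comp continuous_neg.continuousOn
        intro t ht
        constructor <;> simp <;> [linarith [ht.2]; linarith [ht.1]]
      · exact ((continuous_const.mul continuous_id).mul continuous_const).continuousOn
    have hψd : ∀ t ∈ Ico 0 μ, HasDerivAt ψ (φ' t + φ' (-t) - 2 * φ' 0) t := by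
      intro t ht
      have ht1 : |t| < μ := by rw [abs_of_nonneg ht.1]; exact ht.2
      have ht2 : |(-t)| < μ := by rwa [abs_neg]
      have h1 := hφd t ht1
      have h2 : HasDerivAt (fun u : ℝ => f (c (-u))) (φ' (-t) * (-1)) t :=
        (hφd (-t) ht2).comp t (hasDerivAt_neg t)
      have h3 : HasDerivAt (fun u : ℝ => 2 * u * φ' 0) (2 * φ' 0) t := by
        have h := ((hasDerivAt_id t).const_mul (2:ℝ)).mul_const (φ' 0)
        simpa using h
      have := (h1.sub h2).sub h3
      refine this.congr_deriv ?_
      ring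
    have hψbound : ∀ t ∈ Ico 0 μ, |φ' t + φ' (-t) - 2 * φ' 0| ≤ ρ * t ^ 2 := by
      intro t ht
      have htIoo : t ∈ Ioo (-μ) μ := ⟨by linarith [ht.1], ht.2⟩
      have htIoo' : -t ∈ Ioo (-μ) μ := ⟨by linarith [ht.2], by linarith [ht.1]⟩
      have k1 := aux_two htIoo φ' φ'' hφ'dIoo hlipφ
      have k2 := aux_two htIoo' φ' φ'' hφ'dIoo hlipφ
      calc |φ' t + φ' (-t) - 2 * φ' 0|
          = |(φ' t - φ' 0 - t * φ'' 0) + (φ' (-t) - φ' 0 - (-t) * φ'' 0)| := by ring_nf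
        _ ≤ |φ' t - φ' 0 - t * φ'' 0| + |φ' (-t) - φ' 0 - (-t) * φ'' 0| := abs_add_le _ _
        _ ≤ ρ * t ^ 2 / 2 + ρ * (-t) ^ 2 / 2 := add_le_add k1 k2
        _ = ρ * t ^ 2 := by ring
    have hB : ∀ x : ℝ, HasDerivAt (fun y : ℝ => ρ * y ^ 3 / 3) (ρ * x ^ 2) x := by
      intro x
      have h := ((hasDerivAt_pow 3 x).const_mul ρ).div_const 3
      refine h.congr_deriv ?_
      ring
    have hψμ : |ψ μ| ≤ ρ * μ ^ 3 / 3 := by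
      have := image_norm_le_of_norm_deriv_right_le_deriv_boundary
        (f := ψ) (f' := fun t => φ' t + φ' (-t) - 2 * φ' 0) (a := 0) (b := μ)
        hψc
        (fun u hu => (hψd u hu).hasDerivWithinAt)
        (B := fun y => ρ * y ^ 3 / 3) (B' := fun y => ρ * y ^ 2)
        (by simp [hψ, Real.norm_eq_abs]) hB
        (fun u hu => by simpa [Real.norm_eq_abs] using hψbound u hu)
      simpa [Real.norm_eq_abs] using this (right_mem_Icc.2 hμ.le)
    -- translate to the coordinate statement
    have hcoordval : (zoEstimator f μ s - gradient f s) j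
        = (f (c μ) - f (c (-μ))) / (2 * μ) - φ' 0 := by
      have hz : (zoEstimator f μ s) j = (f (c μ) - f (c (-μ))) / (2 * μ) := by
        have h : (zoEstimator f μ s) j
            = (EuclideanSpace.proj j : EuclideanSpace ℝ (Fin d) →L[ℝ] ℝ) (zoEstimator f μ s) := rfl
        rw [h, zoEstimator, map_sum]
        have hcμ : c μ = s + μ • e := rfl
        have hcμ' : c (-μ) = s - μ • e := by
          simp [hc, neg_smul, sub_eq_add_neg]
        rw [hcμ, hcμ']
        simp [he, EuclideanSpace.single_apply]
      have hg : gradient f s j = φ' 0 := by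
        rw [hφ']
        simp only [hc0]
        rw [he, EuclideanSpace.inner_single_right]
        simp
      have : (zoEstimator f μ s - gradient f s) j
          = (zoEstimator f μ s) j - gradient f s j := rfl
      rw [this, hz, hg]
    rw [hcoordval]
    have h2μ : (0:ℝ) < 2 * μ := by linarith
    have : (f (c μ) - f (c (-μ))) / (2 * μ) - φ' 0 = ψ μ / (2 * μ) := by
      rw [hψ]
      field_simp
    rw [this, abs_div, abs_of_pos h2μ, div_le_iff₀ h2μ, hK]
    calc |ψ μ| ≤ ρ * μ ^ 3 / 3 := hψμ
      _ = ρ * μ ^ 2 / 6 * (2 * μ) := by ring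
  -- assemble the norm bound
  have hnorm : ‖zoEstimator f μ s - gradient f s‖ ≤ Real.sqrt d * K := by
    rw [EuclideanSpace.norm_eq]
    have h1 : ∑ i : Fin d, ‖(zoEstimator f μ s - gradient f s) i‖ ^ 2
        ≤ ∑ _i : Fin d, K ^ 2 := by
      apply Finset.sum_le_sum
      intro i _
      have := hcoord i
      rw [Real.norm_eq_abs]
      nlinarith [abs_nonneg ((zoEstimator f μ s - gradient f s) i)]
    calc Real.sqrt (∑ i : Fin d, ‖(zoEstimator f μ s - gradient f s) i‖ ^ 2)
        ≤ Real.sqrt (∑ _i : Fin d, K ^ 2) := Real.sqrt_le_sqrt h1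
      _ = Real.sqrt (d * K ^ 2) := by simp [Finset.sum_const, mul_comm]
      _ = Real.sqrt d * K := by
          rw [Real.sqrt_mul (by positivity), Real.sqrt_sq hK0]
  calc ‖zoEstimator f μ s - gradient f s‖ ≤ Real.sqrt d * K := hnorm
    _ = ρ * μ ^ 2 * Real.sqrt d / 6 := by rw [hK]; ring
end

section
/- Let E be a real inner product space, f : E → ℝ differentiable, x ∈ E, g ∈ E, η > 0 and l > 0. If the gradient of f is l-Lipschitz on the closed ball of radius η‖g‖ centered at x, then f(x − η g) ≤ f(x) − (η/2)(1 − lη)‖g‖² + (η/2)‖∇f(x) − g‖². -/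
open Metric

/-- Descent estimate for one (approximate) gradient step: if the gradient of `f` is
`l`-Lipschitz on the closed ball of radius `η‖g‖` around `x`, then
`f (x - η • g) ≤ f x - (η/2)(1 - lη)‖g‖² + (η/2)‖∇f x - g‖²`. -/
theorem descent_step {E : Type*} [NormedAddCommGroup E] [InnerProductSpace ℝ E]
    [CompleteSpace E]
    (f : E → ℝ) (hf : Differentiable ℝ f) (x g : E) (η l : ℝ)
    (hη : 0 < η) (hl : 0 < l)
    (hlip : ∀ s ∈ closedBall x (η * ‖g‖), ∀ t ∈ closedBall x (η * ‖g‖),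
        ‖gradient f s - gradient f t‖ ≤ l * ‖s - t‖) :
    f (x - η • g) ≤ f x - (η / 2) * (1 - l * η) * ‖g‖ ^ 2
      + (η / 2) * ‖gradient f x - g‖ ^ 2 := by
  set v : E := -(η • g) with hv
  have hvnorm : ‖v‖ = η * ‖g‖ := by
    rw [hv, norm_neg, norm_smul, Real.norm_of_nonneg hη.le]
  have hmem : ∀ t ∈ Set.Icc (0:ℝ) 1, x + t • v ∈ closedBall x (η * ‖g‖) := by
    intro t ht
    rw [mem_closedBall, dist_eq_norm, add_sub_cancel_left, norm_smul,
      Real.norm_of_nonneg ht.1, ← hvnorm]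
    nlinarith [norm_nonneg v, ht.1, ht.2]
  have hx0 : x ∈ closedBall x (η * ‖g‖) := by
    simpa using hmem 0 ⟨le_refl _, zero_le_one⟩
  -- derivative of t ↦ f (x + t • v)
  have hderiv : ∀ t : ℝ,
      HasDerivAt (fun t => f (x + t • v)) (inner ℝ (gradient f (x + t • v)) v : ℝ) t := by
    intro t
    have h1 : HasDerivAt (fun t : ℝ => x + t • v) v t := by
      simpa using ((hasDerivAt_id t).smul_const v).const_add x
    have h2 := ((hf (x + t • v)).hasGradientAt.hasFDerivAt).comp_hasDerivAt t h1
    simp [InnerProductSpace.toDual_apply_apply] at h2 ⊢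
    exact h2
  -- the derivative is Lipschitz on [0,1], hence integrable
  have hlipOn : LipschitzOnWith ⟨l * ‖v‖ ^ 2, by positivity⟩
      (fun t : ℝ => (inner ℝ (gradient f (x + t • v)) v : ℝ)) (Set.Icc 0 1) := by
    apply LipschitzOnWith.of_dist_le_mul
    intro s hs t ht
    have := hlip _ (hmem s hs) _ (hmem t ht)
    rw [Real.dist_eq, Real.dist_eq]
    have key : (inner ℝ (gradient f (x + s • v)) v : ℝ) - inner ℝ (gradient f (x + t • v)) v
        = inner ℝ (gradient f (x + s • v) - gradient f (x + t • v)) v := by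
      rw [inner_sub_left]
    rw [key]
    calc |(inner ℝ (gradient f (x + s • v) - gradient f (x + t • v)) v : ℝ)|
        ≤ ‖gradient f (x + s • v) - gradient f (x + t • v)‖ * ‖v‖ := abs_real_inner_le_norm _ _
      _ ≤ (l * ‖(x + s • v) - (x + t • v)‖) * ‖v‖ := by gcongr
      _ = ↑(⟨l * ‖v‖ ^ 2, by positivity⟩ : NNReal) * |s - t| := by
          have : (x + s • v) - (x + t • v) = (s - t) • v := by
            rw [sub_smul]; abel
          rw [this, norm_smul, Real.norm_eq_abs]
          push_cast
          ring
  have hcont := hlipOn.continuousOn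
  have hint : IntervalIntegrable (fun t : ℝ => (inner ℝ (gradient f (x + t • v)) v : ℝ))
      MeasureTheory.volume 0 1 := by
    apply ContinuousOn.intervalIntegrable
    rwa [Set.uIcc_of_le zero_le_one]
  -- FTC
  have hftc : f (x + v) - f x = ∫ t in (0:ℝ)..1, (inner ℝ (gradient f (x + t • v)) v : ℝ) := by
    have := intervalIntegral.integral_eq_sub_of_hasDerivAt
      (f := fun t => f (x + t • v)) (fun t _ => hderiv t) hint
    simpa using this.symm
  -- pointwise bound on the derivative
  have hbd : ∀ t ∈ Set.Icc (0:ℝ) 1, (inner ℝ (gradient f (x + t • v)) v : ℝ)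
      ≤ inner ℝ (gradient f x) v + (l * ‖v‖ ^ 2) * t := by
    intro t ht
    have h1 : (inner ℝ (gradient f (x + t • v)) v : ℝ)
        = inner ℝ (gradient f x) v + inner ℝ (gradient f (x + t • v) - gradient f x) v := by
      rw [inner_sub_left]; ring
    rw [h1]
    have h2 : (inner ℝ (gradient f (x + t • v) - gradient f x) v : ℝ)
        ≤ ‖gradient f (x + t • v) - gradient f x‖ * ‖v‖ := real_inner_le_norm _ _
    have h3 := hlip _ (hmem t ht) _ hx0
    have h4 : ‖(x + t • v) - x‖ = t * ‖v‖ := by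
      rw [add_sub_cancel_left, norm_smul, Real.norm_of_nonneg ht.1]
    rw [h4] at h3
    have h5 := mul_le_mul_of_nonneg_right h3 (norm_nonneg v)
    have h6 : l * (t * ‖v‖) * ‖v‖ = l * ‖v‖ ^ 2 * t := by ring
    linarith
  have hint2 : IntervalIntegrable (fun t : ℝ => (inner ℝ (gradient f x) v + (l * ‖v‖ ^ 2) * t : ℝ))
      MeasureTheory.volume 0 1 := by
    exact (continuous_const.add ((continuous_const.mul continuous_id))).intervalIntegrable _ _
  have hmono := intervalIntegral.integral_mono_on (μ := MeasureTheory.volume)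
    zero_le_one hint hint2 hbd
  have hval : (∫ t in (0:ℝ)..1, (inner ℝ (gradient f x) v + (l * ‖v‖ ^ 2) * t : ℝ))
      = inner ℝ (gradient f x) v + (l * ‖v‖ ^ 2) / 2 := by
    rw [intervalIntegral.integral_add (f := fun _ : ℝ => (inner ℝ (gradient f x) v : ℝ))
      (g := fun t : ℝ => (l * ‖v‖ ^ 2) * t) intervalIntegrable_const
      ((continuous_const.mul continuous_id').intervalIntegrable _ _),
      intervalIntegral.integral_const, intervalIntegral.integral_const_mul, integral_id]
    simp only [smul_eq_mul]; ring
  -- descent inequality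
  have hkey : f (x + v) ≤ f x + inner ℝ (gradient f x) v + (l * ‖v‖ ^ 2) / 2 := by
    have := hmono
    rw [← hftc] at this
    rw [hval] at this
    linarith
  -- final algebra
  have hxv : x + v = x - η • g := by rw [hv]; abel
  rw [hxv] at hkey
  have hinner : (inner ℝ (gradient f x) v : ℝ) = -(η * inner ℝ (gradient f x) g) := by
    rw [hv, inner_neg_right, inner_smul_right]
  have hnormsub : ‖gradient f x - g‖ ^ 2
      = ‖gradient f x‖ ^ 2 - 2 * inner ℝ (gradient f x) g + ‖g‖ ^ 2 :=
    norm_sub_sq_real _ _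
  have hvsq : ‖v‖ ^ 2 = η ^ 2 * ‖g‖ ^ 2 := by rw [hvnorm]; ring
  rw [hinner, hvsq] at hkey
  rw [hnormsub]
  nlinarith [mul_nonneg hη.le (sq_nonneg ‖gradient f x‖)]
end

section
/- Let E be a real inner product space, l > 0, B > 0, b > 0, and η = 1/(4l). Let f : E → ℝ be differentiable with gradient l-Lipschitz on the closed ball of radius b centered at x. Suppose g ∈ E satisfies ‖g − ∇f(x)‖ ≤ lB/2, ‖g‖ ≥ lB, and η‖g‖ ≤ b. Then f(x − η g) ≤ f(x) − lB²/16. -/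
open Metric

/-- Descent guarantee of the (non-clipped) zeroth-order gradient descent step:
with stepsize `η = 1/(4l)`, an estimator `g` with error at most `lB/2` and norm at
least `lB`, whose step stays in the ball of radius `b`, decreases `f` by `lB²/16`. -/
theorem rzgds_descent {E : Type*} [NormedAddCommGroup E] [InnerProductSpace ℝ E]
    [CompleteSpace E]
    (l B b η : ℝ) (hl : 0 < l) (hB : 0 < B) (hb : 0 < b) (hη : η = 1 / (4 * l))
    (f : E → ℝ) (hf : Differentiable ℝ f) (x g : E)
    (hlip : ∀ s ∈ closedBall x b, ∀ t ∈ closedBall x b,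
        ‖gradient f s - gradient f t‖ ≤ l * ‖s - t‖)
    (hge : ‖g - gradient f x‖ ≤ l * B / 2)
    (hgl : l * B ≤ ‖g‖)
    (hstep : η * ‖g‖ ≤ b) :
    f (x - η • g) ≤ f x - l * B ^ 2 / 16 := by
  have hη0 : 0 < η := by rw [hη]; positivity
  set v := gradient f x with hv
  set r := η * ‖g‖ with hr
  have hr0 : 0 ≤ r := by positivity
  set φ : E → ℝ := fun y => f y - inner ℝ v y with hφ
  -- membership in the small ball implies membership in the big ball
  have hsub : closedBall x r ⊆ closedBall x b := closedBall_subset_closedBall hstep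
  have hfd : ∀ y, fderiv ℝ φ y = fderiv ℝ f y - InnerProductSpace.toDual ℝ E v := by
    intro y
    have h1 : φ = fun y => f y - (InnerProductSpace.toDual ℝ E v : E →L[ℝ] ℝ) y := by
      funext z; simp [hφ, InnerProductSpace.toDual_apply_apply]
    rw [h1, fderiv_fun_sub (hf y) (InnerProductSpace.toDual ℝ E v).differentiableAt,
      (InnerProductSpace.toDual ℝ E v).fderiv]
  have hdiff : ∀ y, DifferentiableAt ℝ φ y := by
    intro y
    have : φ = fun y => f y - (InnerProductSpace.toDual ℝ E v : E →L[ℝ] ℝ) y := by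
      funext z; simp [hφ, InnerProductSpace.toDual_apply_apply]
    rw [this]
    exact (hf y).sub (InnerProductSpace.toDual ℝ E v).differentiableAt
  have hbound : ∀ y ∈ closedBall x r, ‖fderiv ℝ φ y‖ ≤ l * r := by
    intro y hy
    rw [hfd y]
    have h1 : fderiv ℝ f y = InnerProductSpace.toDual ℝ E (gradient f y) := by
      rw [gradient, LinearIsometryEquiv.apply_symm_apply]
    rw [h1, ← map_sub, LinearIsometryEquiv.norm_map]
    have := hlip y (hsub hy) x (mem_closedBall_self hb.le)
    refine this.trans ?_
    have : ‖y - x‖ ≤ r := by rwa [← dist_eq_norm, ← mem_closedBall]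
    nlinarith
  have hxmem : x ∈ closedBall x r := mem_closedBall_self hr0
  have hymem : x - η • g ∈ closedBall x r := by
    rw [mem_closedBall, dist_eq_norm, sub_sub_cancel_left, norm_neg, norm_smul,
      Real.norm_eq_abs, abs_of_pos hη0]
  have key := (convex_closedBall x r).norm_image_sub_le_of_norm_fderiv_le
    (fun y _ => hdiff y) hbound hxmem hymem
  have hnorm : ‖(x - η • g) - x‖ = r := by
    rw [sub_sub_cancel_left, norm_neg, norm_smul, Real.norm_eq_abs, abs_of_pos hη0]
  rw [hnorm] at key
  have key2 : φ (x - η • g) - φ x ≤ l * r * r :=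
    calc φ (x - η • g) - φ x ≤ |φ (x - η • g) - φ x| := le_abs_self _
    _ = ‖φ (x - η • g) - φ x‖ := (Real.norm_eq_abs _).symm
    _ ≤ l * r * r := key
  -- unfold φ
  have hinner : (inner ℝ v (x - η • g) : ℝ) - inner ℝ v x = -η * inner ℝ v g := by
    rw [inner_sub_right, inner_smul_right]; ring
  have hφexp : φ (x - η • g) - φ x
      = f (x - η • g) - f x + η * inner ℝ v g := by
    simp only [hφ]; linarith [hinner]
  -- lower bound on ⟪v, g⟫
  have hvg : (inner ℝ v g : ℝ) ≥ ‖g‖ ^ 2 - l * B / 2 * ‖g‖ := by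
    have h1 : (inner ℝ v g : ℝ) = ‖g‖ ^ 2 - inner ℝ (g - v) g := by
      rw [inner_sub_left, real_inner_self_eq_norm_sq]; ring
    have h2 : (inner ℝ (g - v) g : ℝ) ≤ l * B / 2 * ‖g‖ :=
      (real_inner_le_norm _ _).trans (by nlinarith [norm_nonneg g])
    linarith
  have hfin : f (x - η • g) - f x ≤ l * r * r - η * inner ℝ v g := by linarith [hφexp ▸ key2]
  have hηl : η * l = 1 / 4 := by rw [hη]; field_simp
  -- arithmetic
  have : l * r * r - η * inner ℝ v g ≤ -(l * B ^ 2 / 16) := by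
    have hg0 : (0:ℝ) ≤ ‖g‖ := norm_nonneg g
    have h3 : η * inner ℝ v g ≥ η * (‖g‖ ^ 2 - l * B / 2 * ‖g‖) := by
      exact mul_le_mul_of_nonneg_left hvg hη0.le
    have hrr : l * r * r = η * l * (η * ‖g‖ ^ 2) := by rw [hr]; ring
    have h5 : η * l * (l * B ^ 2) = l * B ^ 2 / 4 := by rw [hηl]; ring
    have h6 : 0 ≤ η * ((‖g‖ - l * B) * (3 * ‖g‖ + l * B)) :=
      mul_nonneg hη0.le (mul_nonneg (sub_nonneg.2 hgl)
        (by nlinarith [mul_pos hl hB]))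
    have h5' : η * (l ^ 2 * B ^ 2) = l * B ^ 2 / 4 := by linarith [h5, (by ring : η * l * (l * B ^ 2) = η * (l ^ 2 * B ^ 2))]
    have h6' : 0 ≤ 3 * (η * ‖g‖ ^ 2) - 2 * (η * (l * B * ‖g‖)) - η * (l ^ 2 * B ^ 2) := by
      linarith [h6, (by ring : η * ((‖g‖ - l * B) * (3 * ‖g‖ + l * B)) = 3 * (η * ‖g‖ ^ 2) - 2 * (η * (l * B * ‖g‖)) - η * (l ^ 2 * B ^ 2))]
    have h3' : η * inner ℝ v g ≥ η * ‖g‖ ^ 2 - (1 / 2) * (η * (l * B * ‖g‖)) := by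
      linarith [h3, (by ring : η * (‖g‖ ^ 2 - l * B / 2 * ‖g‖) = η * ‖g‖ ^ 2 - (1 / 2) * (η * (l * B * ‖g‖)))]
    rw [hrr, hηl]
    linarith [h3', h5', h6']
  linarith
end

section
/- Let E be a real inner product space, l > 0, b > 0, η = 1/(4l), and α ∈ (0,1). Let f : E → ℝ be differentiable with gradient l-Lipschitz on the closed ball of radius b centered at x, and let g ∈ E satisfy α·η·‖g‖ = b. Then f(x − α η g) ≤ f(x) − 2lb²/α + (αη/2)‖∇f(x) − g‖² + lb²/2. -/
open Metric RealInnerProductSpace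

lemma curve_hasDerivAt' {E : Type*} [NormedAddCommGroup E] [InnerProductSpace ℝ E]
    [CompleteSpace E] (f : E → ℝ) (hf : Differentiable ℝ f) (x v : E) (t : ℝ) :
    HasDerivAt (fun t : ℝ => f (x + t • v)) ⟪gradient f (x + t • v), v⟫ t := by
  have hc : HasDerivAt (fun s : ℝ => x + s • v) v t :=
    by simpa using ((hasDerivAt_id t).smul_const v).const_add x
  have hg := (hf (x + t • v)).hasGradientAt
  have := hg.hasFDerivAt.comp_hasDerivAt t hc
  simpa [InnerProductSpace.toDual_apply_apply, Function.comp_def] using this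

lemma descent_aux {E : Type*} [NormedAddCommGroup E] [InnerProductSpace ℝ E]
    [CompleteSpace E] (f : E → ℝ) (hf : Differentiable ℝ f) (x v : E) (l : ℝ)
    (hlip : ∀ t ∈ Set.Icc (0:ℝ) 1, ‖gradient f (x + t • v) - gradient f x‖ ≤ l * t * ‖v‖) :
    f (x + v) ≤ f x + ⟪gradient f x, v⟫ + l / 2 * ‖v‖ ^ 2 := by
  set φ : ℝ → ℝ := fun t => f (x + t • v) - t * ⟪gradient f x, v⟫ - l * ‖v‖ ^ 2 * t ^ 2 / 2
    with hφ
  have hder : ∀ t : ℝ, HasDerivAt φ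
      (⟪gradient f (x + t • v), v⟫ - ⟪gradient f x, v⟫ - l * ‖v‖ ^ 2 * t) t := by
    intro t
    have h1 := curve_hasDerivAt' f hf x v t
    have h2 : HasDerivAt (fun t : ℝ => t * ⟪gradient f x, v⟫) ⟪gradient f x, v⟫ t := by
      simpa using (hasDerivAt_id t).mul_const ⟪gradient f x, v⟫
    have h3 : HasDerivAt (fun t : ℝ => l * ‖v‖ ^ 2 * t ^ 2 / 2) (l * ‖v‖ ^ 2 * t) t := by
      have := ((hasDerivAt_pow 2 t).const_mul (l * ‖v‖ ^ 2)).div_const 2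
      refine this.congr_deriv ?_
      ring
    exact (h1.sub h2).sub h3
  have hanti : AntitoneOn φ (Set.Icc 0 1) := by
    apply antitoneOn_of_deriv_nonpos (convex_Icc 0 1)
    · exact fun t _ => (hder t).differentiableAt.continuousAt.continuousWithinAt
    · intro t ht
      exact (hder t).differentiableAt.differentiableWithinAt
    · intro t ht
      rw [(hder t).deriv]
      rw [interior_Icc] at ht
      have hI : (⟪gradient f (x + t • v) - gradient f x, v⟫ : ℝ) ≤ l * t * ‖v‖ * ‖v‖ :=
        le_trans (real_inner_le_norm _ _)
          (mul_le_mul_of_nonneg_right (hlip t ⟨le_of_lt ht.1, le_of_lt ht.2⟩) (norm_nonneg _))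
      rw [inner_sub_left] at hI
      nlinarith [hI]
  have := hanti (Set.left_mem_Icc.mpr zero_le_one) (Set.right_mem_Icc.mpr zero_le_one)
    zero_le_one
  simp only [hφ, one_smul, zero_smul, add_zero, one_mul, one_pow, zero_pow, mul_zero,
    zero_mul, sub_zero, zero_div] at this
  linarith


/-- Descent estimate of the clipped zeroth-order gradient descent step: with
stepsize `η = 1/(4l)` rescaled by `α ∈ (0,1)` such that `αη‖g‖ = b`, one has
`f (x - αη g) ≤ f x - 2lb²/α + (αη/2)‖∇f x - g‖² + lb²/2`. -/
theorem rzgds_clipped_descent {E : Type*} [NormedAddCommGroup E] [InnerProductSpace ℝ E]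
    [CompleteSpace E]
    (l b η α : ℝ) (hl : 0 < l) (hb : 0 < b) (hη : η = 1 / (4 * l))
    (hα0 : 0 < α) (hα1 : α < 1)
    (f : E → ℝ) (hf : Differentiable ℝ f) (x g : E)
    (hlip : ∀ s ∈ closedBall x b, ∀ t ∈ closedBall x b,
        ‖gradient f s - gradient f t‖ ≤ l * ‖s - t‖)
    (hclip : α * η * ‖g‖ = b) :
    f (x - (α * η) • g) ≤ f x - 2 * l * b ^ 2 / α
      + (α * η / 2) * ‖gradient f x - g‖ ^ 2 + l * b ^ 2 / 2 := by
  have hc0 : 0 < α * η := by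
    rw [hη]; positivity
  set v : E := -((α * η) • g) with hvdef
  have hvn : ‖v‖ = b := by
    rw [hvdef, norm_neg, norm_smul, Real.norm_eq_abs, abs_of_pos hc0, hclip]
  have hkey := descent_aux f hf x v l (by
    intro t ht
    have hmem : x + t • v ∈ closedBall x b := by
      rw [mem_closedBall, dist_eq_norm]
      have : x + t • v - x = t • v := by abel
      rw [this, norm_smul, Real.norm_eq_abs, abs_of_nonneg ht.1, hvn]
      nlinarith [ht.2, hb]
    have hx : x ∈ closedBall x b := mem_closedBall_self hb.le
    have := hlip _ hmem _ hx
    have heq : x + t • v - x = t • v := by abel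
    rw [heq, norm_smul, Real.norm_eq_abs, abs_of_nonneg ht.1] at this
    linarith [this])
  have hxv : x + v = x - (α * η) • g := by rw [hvdef]; abel
  rw [hxv] at hkey
  -- inner product estimates
  set d : E := gradient f x - g with hddef
  have hinner : ⟪gradient f x, v⟫ = -(α * η) * (⟪d, g⟫ + ‖g‖ ^ 2) := by
    rw [hvdef, inner_neg_right, real_inner_smul_right, hddef, inner_sub_left,
      real_inner_self_eq_norm_sq]
    ring
  have hdg : -(‖d‖ * ‖g‖) ≤ ⟪d, g⟫ := by
    have := abs_real_inner_le_norm d g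
    rw [abs_le] at this
    linarith [this.1]
  have hdg2 : ‖d‖ * ‖g‖ ≤ ‖d‖ ^ 2 / 2 + ‖g‖ ^ 2 / 2 := by
    nlinarith [sq_nonneg (‖d‖ - ‖g‖)]
  have hgn : ‖g‖ = 4 * l * b / α := by
    rw [hη] at hclip
    field_simp at hclip ⊢
    linarith
  rw [hinner, hvn] at hkey
  have hηpos : 0 < η := by rw [hη]; positivity
  -- now pure algebra
  have h1 : -(α * η) * (⟪d, g⟫ + ‖g‖ ^ 2) ≤
      -(α * η / 2) * ‖g‖ ^ 2 + (α * η / 2) * ‖d‖ ^ 2 := by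
    nlinarith [hc0, hdg, hdg2]
  have h2 : (α * η / 2) * ‖g‖ ^ 2 = 2 * l * b ^ 2 / α := by
    rw [hη, hgn]
    field_simp
    ring
  linarith
end

section
/- Let E be a real inner product space, θ ∈ [0,1], B > 0 and K ≥ 1 a natural number. Let (s^k)_{k ≥ −1} be a sequence in E with s^{−1} = s^0, and define y^k = s^k + (1 − θ)(s^k − s^{k−1}) for k ≥ 0. Suppose that for every k with 1 ≤ k ≤ K one has k · ∑_{j=0}^{k−1} ‖s^{j+1} − s^j‖² ≤ B². Then for every k with 0 ≤ k ≤ K, ‖s^k − s^0‖ ≤ B and ‖y^k − s^0‖ ≤ 2B. -/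
/-- Mechanism lemma of the tangent space step: as long as the termination criterion
`k ∑_{j<k} ‖s^{j+1} - s^j‖² > B²` has not triggered up to iteration `K`, all the
iterates `s^k` and extrapolated iterates `y^k` remain within distance `B`
(resp. `2B`) of the starting point `s^0`.  The convention `s⁻¹ = s⁰` is encoded
through truncated subtraction: `s (k - 1) = s 0` when `k = 0`. -/
theorem tss_mechanism {E : Type*} [NormedAddCommGroup E] [InnerProductSpace ℝ E]
    (θ B : ℝ) (hθ0 : 0 ≤ θ) (hθ1 : θ ≤ 1) (hB : 0 < B) (K : ℕ) (hK : 1 ≤ K)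
    (s y : ℕ → E)
    (hy : ∀ k, y k = s k + (1 - θ) • (s k - s (k - 1)))
    (hcrit : ∀ k, 1 ≤ k → k ≤ K →
        (k : ℝ) * ∑ j ∈ Finset.range k, ‖s (j + 1) - s j‖ ^ 2 ≤ B ^ 2) :
    ∀ k ≤ K, ‖s k - s 0‖ ≤ B ∧ ‖y k - s 0‖ ≤ 2 * B := by
  intro k hk
  -- general bound for s
  have hs : ∀ m, m ≤ K → ‖s m - s 0‖ ≤ B := by
    intro m hm
    rcases Nat.eq_zero_or_pos m with h0 | h1
    · simp [h0, hB.le]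
    · have tel : s m - s 0 = ∑ j ∈ Finset.range m, (s (j + 1) - s j) := by
        rw [Finset.sum_range_sub]
      have h2 : ‖s m - s 0‖ ≤ ∑ j ∈ Finset.range m, ‖s (j + 1) - s j‖ := by
        rw [tel]; exact norm_sum_le _ _
      have h3 : (∑ j ∈ Finset.range m, ‖s (j + 1) - s j‖) ^ 2 ≤
          (m : ℝ) * ∑ j ∈ Finset.range m, ‖s (j + 1) - s j‖ ^ 2 := by
        have := sq_sum_le_card_mul_sum_sq (s := Finset.range m)
          (f := fun j => ‖s (j + 1) - s j‖)
        simpa using this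
      have h4 := (h3.trans (hcrit m h1 hm))
      have h5 : (∑ j ∈ Finset.range m, ‖s (j + 1) - s j‖) ≤ B := by
        have hnn : (0:ℝ) ≤ ∑ j ∈ Finset.range m, ‖s (j + 1) - s j‖ :=
          Finset.sum_nonneg fun _ _ => norm_nonneg _
        nlinarith
      linarith
  refine ⟨hs k hk, ?_⟩
  rcases Nat.eq_zero_or_pos k with h0 | h1
  · simp [h0, hy 0]; linarith
  · have hstep : ‖s k - s (k - 1)‖ ≤ B := by
      have hk1 : k - 1 + 1 = k := Nat.succ_pred_eq_of_pos h1
      have hmem : k - 1 ∈ Finset.range k := Finset.mem_range.mpr (Nat.pred_lt h1.ne')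
      have h6 : ‖s (k - 1 + 1) - s (k - 1)‖ ^ 2 ≤
          ∑ j ∈ Finset.range k, ‖s (j + 1) - s j‖ ^ 2 :=
        Finset.single_le_sum (f := fun j => ‖s (j + 1) - s j‖ ^ 2)
          (fun _ _ => sq_nonneg _) hmem
      have h7 := hcrit k h1 hk
      have hk1' : (1:ℝ) ≤ (k:ℝ) := by exact_mod_cast h1
      have hsum_nn : (0:ℝ) ≤ ∑ j ∈ Finset.range k, ‖s (j + 1) - s j‖ ^ 2 :=
        Finset.sum_nonneg fun _ _ => sq_nonneg _
      have h8 : ‖s (k - 1 + 1) - s (k - 1)‖ ^ 2 ≤ B ^ 2 := by nlinarith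
      rw [hk1] at h8
      nlinarith [norm_nonneg (s k - s (k - 1))]
    have hyk : y k - s 0 = (s k - s 0) + (1 - θ) • (s k - s (k - 1)) := by
      rw [hy k]; abel
    calc ‖y k - s 0‖ ≤ ‖s k - s 0‖ + ‖(1 - θ) • (s k - s (k - 1))‖ := by
          rw [hyk]; exact norm_add_le _ _
      _ ≤ B + (1 - θ) * B := by
          rw [norm_smul, Real.norm_eq_abs, abs_of_nonneg (by linarith)]
          exact add_le_add (hs k hk)
            (mul_le_mul_of_nonneg_left hstep (by linarith))
      _ ≤ 2 * B := by nlinarith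
end

section
/- Let E be a real inner product space, l > 0, B > 0 and η = 1/(4l). Let f : E → ℝ be differentiable, and suppose ‖∇f(u) − ∇f(v)‖ ≤ l‖u − v‖ for all u, v in a set containing 0, s^0 and y. Suppose g₀, g₁ ∈ E satisfy ‖g₀‖ ≤ lB, ‖g₀ − ∇f(0)‖ ≤ lB/2 and ‖g₁ − ∇f(y)‖ ≤ lB/2, and suppose ‖s^0‖ ≤ B/2 and ‖y − s^0‖ ≤ 2B. Then ‖∇f(y)‖ ≤ 4lB and ‖(y − η g₁) − s^0‖ ≤ 4B. -/
/-- Bound on the gradient at the last extrapolated iterate and on the distance of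
the post-trigger iterate `s^𝒦 = y - η g₁` from the starting point `s⁰` in the
tangent space step. -/
theorem tss_last_iterate_bound {E : Type*} [NormedAddCommGroup E] [InnerProductSpace ℝ E]
    [CompleteSpace E]
    (l B η : ℝ) (hl : 0 < l) (hB : 0 < B) (hη : η = 1 / (4 * l))
    (f : E → ℝ) (hf : Differentiable ℝ f)
    (S : Set E) (s0 y : E) (h0S : (0 : E) ∈ S) (hs0S : s0 ∈ S) (hyS : y ∈ S)
    (hlip : ∀ u ∈ S, ∀ v ∈ S, ‖gradient f u - gradient f v‖ ≤ l * ‖u - v‖)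
    (g0 g1 : E)
    (hg0 : ‖g0‖ ≤ l * B) (hg0e : ‖g0 - gradient f 0‖ ≤ l * B / 2)
    (hg1e : ‖g1 - gradient f y‖ ≤ l * B / 2)
    (hs0n : ‖s0‖ ≤ B / 2) (hyn : ‖y - s0‖ ≤ 2 * B) :
    ‖gradient f y‖ ≤ 4 * l * B ∧ ‖(y - η • g1) - s0‖ ≤ 4 * B := by
  have hy : ‖y‖ ≤ 5 * B / 2 := by
    calc ‖y‖ = ‖(y - s0) + s0‖ := congrArg norm (by abel)
    _ ≤ ‖y - s0‖ + ‖s0‖ := norm_add_le _ _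
    _ ≤ 2 * B + B / 2 := add_le_add hyn hs0n
    _ = 5 * B / 2 := by ring
  have hgy : ‖gradient f y‖ ≤ 4 * l * B := by
    have h1 := hlip y hyS 0 h0S
    simp only [sub_zero] at h1
    calc ‖gradient f y‖
        = ‖(gradient f y - gradient f 0) + (gradient f 0 - g0) + g0‖ := congrArg norm (by abel)
      _ ≤ ‖(gradient f y - gradient f 0) + (gradient f 0 - g0)‖ + ‖g0‖ := norm_add_le _ _
      _ ≤ ‖gradient f y - gradient f 0‖ + ‖gradient f 0 - g0‖ + ‖g0‖ := by
          exact add_le_add (norm_add_le _ _) le_rfl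
      _ ≤ l * (5 * B / 2) + l * B / 2 + l * B := by
          refine add_le_add (add_le_add (h1.trans ?_) ?_) hg0
          · exact mul_le_mul_of_nonneg_left hy hl.le
          · rwa [norm_sub_rev]
      _ = 4 * l * B := by ring
  refine ⟨hgy, ?_⟩
  have hg1 : ‖g1‖ ≤ 9 * l * B / 2 := by
    calc ‖g1‖ = ‖(g1 - gradient f y) + gradient f y‖ := congrArg norm (by abel)
    _ ≤ ‖g1 - gradient f y‖ + ‖gradient f y‖ := norm_add_le _ _
    _ ≤ l * B / 2 + 4 * l * B := add_le_add hg1e hgy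
    _ = 9 * l * B / 2 := by ring
  calc ‖(y - η • g1) - s0‖ = ‖(y - s0) + (-(η • g1))‖ := congrArg norm (by abel)
  _ ≤ ‖y - s0‖ + ‖η • g1‖ := by simpa using norm_add_le (y - s0) (-(η • g1))
  _ ≤ 2 * B + |η| * ‖g1‖ := by rw [norm_smul]; exact add_le_add hyn le_rfl
  _ ≤ 2 * B + (1 / (4 * l)) * (9 * l * B / 2) := by
      refine add_le_add le_rfl (mul_le_mul ?_ hg1 (norm_nonneg _) (by positivity))
      rw [hη, abs_of_pos (by positivity)]
  _ ≤ 4 * B := by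
      have h : (1 / (4 * l)) * (9 * l * B / 2) = 9 * B / 8 := by
        field_simp; ring
      rw [h]; linarith
end

section
/- Let E be a d-dimensional real inner product space, ρ > 0, B > 0, and let f : E → ℝ be twice continuously differentiable with Hessian ρ-Lipschitz on the closed ball of radius 4B centered at s^0. Let (u_j)_{j=1}^d be an orthonormal basis of E consisting of eigenvectors of the self-adjoint operator ∇²f(s^0), with eigenvalues λ_j, and for each j define the one-dimensional quadratic h_j(z) = ⟨∇f(s^0), u_j⟩ · (z − ⟨s^0, u_j⟩) + (λ_j/2) · (z − ⟨s^0, u_j⟩)². Then for every s ∈ E with ‖s − s^0‖ ≤ 4B, f(s) ≤ f(s^0) + 32ρB³/3 + ∑_{j=1}^d h_j(⟨s, u_j⟩). -/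
open Metric
open scoped RealInnerProductSpace

/-- Quadratic upper model of a function with `ρ`-Lipschitz Hessian along an
orthonormal eigenbasis of the Hessian at the starting point: the function value at
any point `s` within distance `4B` of `s⁰` is controlled by the sum of
one-dimensional quadratics `h_j` in the eigen-coordinates. -/
theorem quadratic_model_bound {E : Type*} [NormedAddCommGroup E] [InnerProductSpace ℝ E]
    [FiniteDimensional ℝ E] (d : ℕ) (hdim : Module.finrank ℝ E = d)
    (ρ B : ℝ) (hρ : 0 < ρ) (hB : 0 < B)
    (f : E → ℝ) (hf : ContDiff ℝ 2 f) (s0 : E)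
    (hlip : ∀ u ∈ closedBall s0 (4 * B), ∀ v ∈ closedBall s0 (4 * B),
        ‖fderiv ℝ (gradient f) u - fderiv ℝ (gradient f) v‖ ≤ ρ * ‖u - v‖)
    (u : OrthonormalBasis (Fin d) ℝ E) (lam : Fin d → ℝ)
    (heig : ∀ j, (fderiv ℝ (gradient f) s0) (u j) = lam j • u j) :
    ∀ s : E, ‖s - s0‖ ≤ 4 * B →
      f s ≤ f s0 + 32 * ρ * B ^ 3 / 3 +
        ∑ j : Fin d,
          (⟪gradient f s0, u j⟫ * (⟪s, u j⟫ - ⟪s0, u j⟫)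
            + (lam j / 2) * (⟪s, u j⟫ - ⟪s0, u j⟫) ^ 2) := by
  intro s hs
  set v : E := s - s0 with hv
  set L : ℝ → E := fun t => s0 + t • v with hLdef
  have hline : ∀ t : ℝ, HasDerivAt L v t := by
    intro t
    simpa [hLdef] using ((hasDerivAt_id t).smul_const v).const_add s0
  have hfd : Differentiable ℝ f := hf.differentiable (by norm_num)
  have hgc : ContDiff ℝ 1 (gradient f) := by
    have h2 : ContDiff ℝ 1 (fderiv ℝ f) := hf.fderiv_right (by norm_num)
    exact (InnerProductSpace.toDual ℝ E).symm.contDiff.comp h2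
  have hgd : Differentiable ℝ (gradient f) := hgc.differentiable one_ne_zero
  have hkey : ∀ (x : E) (w : E), fderiv ℝ f x w = ⟪gradient f x, w⟫ := by
    intro x w
    exact (InnerProductSpace.toDual_symm_apply).symm
  -- φ' and ψ'
  have hphi : ∀ t : ℝ, HasDerivAt (fun t => f (L t)) (⟪gradient f (L t), v⟫) t := by
    intro t
    have := (hfd (L t)).hasFDerivAt.comp_hasDerivAt t (hline t)
    rw [hkey] at this
    exact this
  have hpsi : ∀ t : ℝ, HasDerivAt (fun t => ⟪gradient f (L t), v⟫)
      (⟪(fderiv ℝ (gradient f) (L t)) v, v⟫) t := by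
    intro t
    have h1 : HasDerivAt (fun t => gradient f (L t)) ((fderiv ℝ (gradient f) (L t)) v) t :=
      (hgd (L t)).hasFDerivAt.comp_hasDerivAt t (hline t)
    have := HasDerivAt.inner ℝ h1 (hasDerivAt_const t v)
    simpa using this
  -- membership and Lipschitz bound
  have hnv : ‖v‖ ≤ 4 * B := hs
  have hmem : ∀ t ∈ Set.Icc (0:ℝ) 1, L t ∈ closedBall s0 (4 * B) := by
    intro t ht
    simp only [mem_closedBall, dist_eq_norm, hLdef, add_sub_cancel_left, norm_smul,
      Real.norm_eq_abs]
    calc |t| * ‖v‖ ≤ 1 * ‖v‖ := by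
          apply mul_le_mul_of_nonneg_right _ (norm_nonneg v)
          rw [abs_le]; constructor <;> linarith [ht.1, ht.2]
      _ = ‖v‖ := one_mul _
      _ ≤ 4 * B := hnv
  set q : ℝ := ⟪(fderiv ℝ (gradient f) s0) v, v⟫ with hq
  set gv : ℝ := ⟪gradient f s0, v⟫ with hgv
  set r : ℝ := ρ * ‖v‖ ^ 3 with hr
  have hpsibound : ∀ t ∈ Set.Icc (0:ℝ) 1,
      ⟪(fderiv ℝ (gradient f) (L t)) v, v⟫ ≤ q + r * t := by
    intro t ht
    have hdiff : ⟪(fderiv ℝ (gradient f) (L t)) v, v⟫ - q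
        = ⟪(fderiv ℝ (gradient f) (L t) - fderiv ℝ (gradient f) s0) v, v⟫ := by
      simp [hq, inner_sub_left]
    have hs0mem : s0 ∈ closedBall s0 (4 * B) := by
      simp [mem_closedBall]; positivity
    have hop : ‖fderiv ℝ (gradient f) (L t) - fderiv ℝ (gradient f) s0‖ ≤ ρ * (t * ‖v‖) := by
      have := hlip (L t) (hmem t ht) s0 hs0mem
      have hLt : L t - s0 = t • v := by simp [hLdef]
      rw [hLt, norm_smul, Real.norm_eq_abs, abs_of_nonneg ht.1] at this
      exact this
    have h1 : ⟪(fderiv ℝ (gradient f) (L t) - fderiv ℝ (gradient f) s0) v, v⟫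
        ≤ ρ * (t * ‖v‖) * ‖v‖ * ‖v‖ := by
      calc ⟪(fderiv ℝ (gradient f) (L t) - fderiv ℝ (gradient f) s0) v, v⟫
          ≤ ‖(fderiv ℝ (gradient f) (L t) - fderiv ℝ (gradient f) s0) v‖ * ‖v‖ :=
            real_inner_le_norm _ _
        _ ≤ ‖fderiv ℝ (gradient f) (L t) - fderiv ℝ (gradient f) s0‖ * ‖v‖ * ‖v‖ := by
            apply mul_le_mul_of_nonneg_right _ (norm_nonneg v)
            exact ContinuousLinearMap.le_opNorm _ v
        _ ≤ ρ * (t * ‖v‖) * ‖v‖ * ‖v‖ := by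
            apply mul_le_mul_of_nonneg_right
            exact mul_le_mul_of_nonneg_right hop (norm_nonneg v)
            exact norm_nonneg v
    have : ⟪(fderiv ℝ (gradient f) (L t)) v, v⟫ - q ≤ r * t := by
      rw [hdiff]; calc _ ≤ ρ * (t * ‖v‖) * ‖v‖ * ‖v‖ := h1
        _ = r * t := by rw [hr]; ring
    linarith
  -- A ≤ 0 on [0,1]
  set A : ℝ → ℝ := fun t => ⟪gradient f (L t), v⟫ - gv - t * q - r * t ^ 2 / 2 with hA
  have hA' : ∀ t : ℝ, HasDerivAt A (⟪(fderiv ℝ (gradient f) (L t)) v, v⟫ - q - r * t) t := by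
    intro t
    have h1 := (((hpsi t).sub_const gv).sub
      ((hasDerivAt_id t).mul_const q)) |>.sub
      (((hasDerivAt_pow 2 t).const_mul r).div_const 2)
    refine h1.congr_deriv ?_
    push_cast
    ring
  have hAle : ∀ t ∈ Set.Icc (0:ℝ) 1, A t ≤ 0 := by
    have hanti : AntitoneOn A (Set.Icc 0 1) := by
      apply antitoneOn_of_deriv_nonpos (convex_Icc 0 1)
      · exact fun t _ => (hA' t).continuousAt.continuousWithinAt
      · exact fun t _ => (hA' t).differentiableAt.differentiableWithinAt
      · intro t ht
        rw [interior_Icc] at ht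
        rw [(hA' t).deriv]
        have := hpsibound t (Set.mem_Icc.2 ⟨le_of_lt ht.1, le_of_lt ht.2⟩)
        linarith
    intro t ht
    have hA0 : A 0 = 0 := by simp [hA, hLdef, hgv]
    have := hanti (Set.left_mem_Icc.2 zero_le_one) ht ht.1
    rw [hA0] at this; exact this
  -- G ≤ 0
  set G : ℝ → ℝ := fun t => f (L t) - f s0 - t * gv - t ^ 2 * q / 2 - r * t ^ 3 / 6 with hG
  have hG' : ∀ t : ℝ, HasDerivAt G (A t) t := by
    intro t
    have h1 := ((((hphi t).sub_const (f s0)).sub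
      ((hasDerivAt_id t).mul_const gv)).sub
      (((hasDerivAt_pow 2 t).mul_const q).div_const 2)).sub
      (((hasDerivAt_pow 3 t).const_mul r).div_const 6)
    refine h1.congr_deriv ?_
    simp only [hA]
    push_cast
    ring
  have hGanti : AntitoneOn G (Set.Icc 0 1) := by
    apply antitoneOn_of_deriv_nonpos (convex_Icc 0 1)
    · exact fun t _ => (hG' t).continuousAt.continuousWithinAt
    · exact fun t _ => (hG' t).differentiableAt.differentiableWithinAt
    · intro t ht
      rw [interior_Icc] at ht
      rw [(hG' t).deriv]
      exact hAle t ⟨le_of_lt ht.1, le_of_lt ht.2⟩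
  have hG1 : G 1 ≤ 0 := by
    have hG0 : G 0 = 0 := by simp [hG, hLdef]
    have := hGanti (Set.left_mem_Icc.2 zero_le_one) (Set.right_mem_Icc.2 zero_le_one) zero_le_one
    rw [hG0] at this; exact this
  have hL1 : L 1 = s := by simp [hLdef, hv]
  have hmain : f s ≤ f s0 + gv + q / 2 + r / 6 := by
    have : f (L 1) - f s0 - 1 * gv - 1 ^ 2 * q / 2 - r * 1 ^ 3 / 6 ≤ 0 := hG1
    rw [hL1] at this; linarith
  -- remainder bound
  have hrem : r / 6 ≤ 32 * ρ * B ^ 3 / 3 := by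
    have h1 : ‖v‖ ^ 3 ≤ (4 * B) ^ 3 := by
      apply pow_le_pow_left₀ (norm_nonneg v) hnv
    have : r ≤ ρ * (4 * B) ^ 3 := by
      rw [hr]; exact mul_le_mul_of_nonneg_left h1 (le_of_lt hρ)
    nlinarith
  -- identify the sum
  have hc : ∀ j, ⟪s, u j⟫ - ⟪s0, u j⟫ = ⟪u j, v⟫ := by
    intro j
    rw [hv, ← inner_sub_left, real_inner_comm]
  have hsum : ∑ j : Fin d,
      (⟪gradient f s0, u j⟫ * (⟪s, u j⟫ - ⟪s0, u j⟫)
        + (lam j / 2) * (⟪s, u j⟫ - ⟪s0, u j⟫) ^ 2) = gv + q / 2 := by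
    have hexp : ∀ j, (⟪gradient f s0, u j⟫ * (⟪s, u j⟫ - ⟪s0, u j⟫)
        + (lam j / 2) * (⟪s, u j⟫ - ⟪s0, u j⟫) ^ 2)
        = ⟪gradient f s0, u j⟫ * ⟪u j, v⟫ + (lam j * (⟪u j, v⟫ * ⟪u j, v⟫)) / 2 := by
      intro j; rw [hc j]; ring
    rw [Finset.sum_congr rfl (fun j _ => hexp j), Finset.sum_add_distrib]
    have h1 : ∑ j : Fin d, ⟪gradient f s0, u j⟫ * ⟪u j, v⟫ = gv :=
      u.sum_inner_mul_inner (gradient f s0) v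
    have h2 : ∑ j : Fin d, lam j * (⟪u j, v⟫ * ⟪u j, v⟫) / 2 = q / 2 := by
      rw [← Finset.sum_div]
      congr 1
      have hvrep : (fderiv ℝ (gradient f) s0) v
          = ∑ j : Fin d, ⟪u j, v⟫ • (lam j • u j) := by
        conv_lhs => rw [← u.sum_repr v]
        rw [map_sum]
        congr 1
        funext j
        rw [u.repr_apply_apply, map_smul, heig j]
      rw [hq, hvrep, sum_inner]
      congr 1
      funext j
      rw [real_inner_smul_left, real_inner_smul_left]
      ring
    rw [h1, h2]
  rw [hsum]
  linarith
end

section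
/- Let l > 0, η = 1/(4l), θ ∈ (0,1], and let λ be a real number with −θ/η ≤ λ ≤ l. Let h : ℝ → ℝ be the quadratic h(z) = a(z − z₀) + (λ/2)(z − z₀)² for some real a, z₀, with derivative h'(z) = a + λ(z − z₀). Given reals s^{k−1}, s^k and an error term ε^k, define y^k = s^k + (1 − θ)(s^k − s^{k−1}) and s^{k+1} = y^k − η h'(y^k) − η ε^k, and define the potential L(u, v) = h(u) + ((1 + θ)(1 − θ)²/(2η)) · (u − v)². Then L(s^{k+1}, s^k) ≤ L(s^k, s^{k−1}) − (3θ/(8η)) · (s^{k+1} − s^k)² + (2η/θ) · (ε^k)². -/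
/-- Key scaled polynomial inequality: with `w = (1-θ)d` and `t = w - G - E`,
the scaled potential-decrease quantity is nonpositive. -/
lemma agd_key_mild (θ μ G d E : ℝ) (hθ0 : 0 < θ) (hθ1 : θ ≤ 1)
    (h1 : -θ ≤ μ) (h2 : μ ≤ 1/4) :
    θ * (G * ((1-θ)*d - G - E) + μ/2 * (G+E)^2 - μ/2 * ((1-θ)*d)^2
      + (1+θ)*(1-θ)^2/2 * (((1-θ)*d - G - E)^2 - d^2)
      + 3*θ/8 * ((1-θ)*d - G - E)^2) - 2 * E^2 ≤ 0 := by
  nlinarith [mul_nonneg (mul_nonneg hθ0.le (by linarith : (0:ℝ) ≤ 1/4 - μ)) (sq_nonneg (G+E)),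
    mul_nonneg (mul_nonneg hθ0.le (by linarith : (0:ℝ) ≤ μ + θ)) (sq_nonneg ((1-θ)*d)),
    sq_nonneg (E + θ*((1-θ)*d - G - E)/4),
    mul_nonneg hθ0.le (sq_nonneg ((1-θ)*d - ((1-θ)*d - G - E))),
    mul_nonneg (mul_nonneg (mul_nonneg (mul_nonneg hθ0.le hθ0.le) hθ0.le)
      (by linarith : (0:ℝ) ≤ 1 - θ)) (sq_nonneg ((1-θ)*d - G - E))]

set_option maxHeartbeats 1600000 in
/-- One-step potential decrease for inexact accelerated gradient descent applied
to a one-dimensional quadratic with mild curvature `-θ/η ≤ λ ≤ l`. -/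
theorem agd_potential_decrease_mild (l η θ lam a z0 : ℝ)
    (hl : 0 < l) (hη : η = 1 / (4 * l)) (hθ0 : 0 < θ) (hθ1 : θ ≤ 1)
    (hlam1 : -(θ / η) ≤ lam) (hlam2 : lam ≤ l)
    (h h' : ℝ → ℝ)
    (hdef : ∀ z, h z = a * (z - z0) + (lam / 2) * (z - z0) ^ 2)
    (h'def : ∀ z, h' z = a + lam * (z - z0))
    (skm sk εk yk skp : ℝ)
    (hyk : yk = sk + (1 - θ) * (sk - skm))
    (hskp : skp = yk - η * h' yk - η * εk)
    (L : ℝ → ℝ → ℝ)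
    (hL : ∀ u v, L u v = h u + ((1 + θ) * (1 - θ) ^ 2 / (2 * η)) * (u - v) ^ 2) :
    L skp sk ≤ L sk skm - (3 * θ / (8 * η)) * (skp - sk) ^ 2 + (2 * η / θ) * εk ^ 2 := by
  have hη0 : 0 < η := by rw [hη]; positivity
  have hμ1 : -θ ≤ η * lam := by
    have h' := (div_le_iff₀ hη0).mp (by rwa [neg_div] : -θ / η ≤ lam)
    linarith [h', mul_comm lam η]
  have hμ2 : η * lam ≤ 1/4 := by
    have h4 : η * (4 * l) = 1 := by rw [hη]; field_simp
    nlinarith [mul_le_mul_of_nonneg_left hlam2 hη0.le]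
  have key := agd_key_mild θ (η * lam)
    (η * (a + lam * ((sk + (1 - θ) * (sk - skm)) - z0))) (sk - skm) (η * εk)
    hθ0 hθ1 hμ1 hμ2
  have hs : θ * η * (L skp sk - (L sk skm - (3 * θ / (8 * η)) * (skp - sk) ^ 2
      + (2 * η / θ) * εk ^ 2)) ≤ 0 := by
    have hident : θ * η * (L skp sk - (L sk skm - (3 * θ / (8 * η)) * (skp - sk) ^ 2
        + (2 * η / θ) * εk ^ 2))
        = θ * ((η * (a + lam * ((sk + (1 - θ) * (sk - skm)) - z0)))
            * ((1-θ)*(sk - skm) - (η * (a + lam * ((sk + (1 - θ) * (sk - skm)) - z0))) - (η * εk))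
          + (η * lam)/2 * ((η * (a + lam * ((sk + (1 - θ) * (sk - skm)) - z0))) + (η * εk))^2
          - (η * lam)/2 * ((1-θ)*(sk - skm))^2
          + (1+θ)*(1-θ)^2/2 * (((1-θ)*(sk - skm)
              - (η * (a + lam * ((sk + (1 - θ) * (sk - skm)) - z0))) - (η * εk))^2 - (sk - skm)^2)
          + 3*θ/8 * ((1-θ)*(sk - skm)
              - (η * (a + lam * ((sk + (1 - θ) * (sk - skm)) - z0))) - (η * εk))^2)
          - 2 * (η * εk)^2 := by
      rw [hL, hL, hdef, hdef, hskp, h'def, hyk]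
      field_simp
      ring
    rw [hident]; exact key
  nlinarith [hs, mul_pos hθ0 hη0]
end

section
/- Let l > 0, η = 1/(4l), θ ∈ (0,1], and let λ be a real number with −θ/η ≤ λ ≤ l. Let h : ℝ → ℝ be the quadratic h(z) = a(z − s^0) + (λ/2)(z − s^0)² for some real a, with derivative h'(z) = a + λ(z − s^0). Let (ε^k)_{k ≥ 0} be real error terms, set s^{−1} = s^0, and define y^k = s^k + (1 − θ)(s^k − s^{k−1}) and s^{k+1} = y^k − η h'(y^k) − η ε^k for k ≥ 0. Then for every natural number N ≥ 1, h(s^N) ≤ −(3θ/(8η)) · ∑_{k=0}^{N−1} (s^{k+1} − s^k)² + (2η/θ) · ∑_{k=0}^{N−1} (ε^k)². -/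

theorem coef_aux (l θ lam : ℝ) (hl : 0 < l) (hθ0 : 0 < θ) (hθ1 : θ ≤ 1)
    (hlam1 : -(4 * l * θ) ≤ lam) (hlam2 : lam ≤ l) :
    (1 - θ) * (4 * l - lam) / 2 + ((1 - θ) * (4 * l - lam) / 2 - (4 * l - lam / 2)
      + l * θ / 2) ≤ -(3 * (l * θ) / 2) := by
  rcases le_or_gt θ (1 / 2) with hcase | hcase
  · nlinarith [mul_nonneg (show (0:ℝ) ≤ lam + 4 * l * θ by linarith)
      (show (0:ℝ) ≤ 1 / 2 - θ by linarith), mul_nonneg (mul_nonneg hl.le hθ0.le) hθ0.le]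
  · nlinarith [mul_nonneg (show (0:ℝ) ≤ l - lam by linarith)
      (show (0:ℝ) ≤ θ - 1 / 2 by linarith), mul_pos hl hθ0]

theorem step_aux (η θ lam a s0 skm sk sk1 e : ℝ) (hηne : η ≠ 0)
    (h1 : sk1 = (sk + (1 - θ) * (sk - skm))
        - η * (a + lam * ((sk + (1 - θ) * (sk - skm)) - s0)) - η * e) :
    (a * (sk1 - s0) + (lam / 2) * (sk1 - s0) ^ 2)
      - (a * (sk - s0) + (lam / 2) * (sk - s0) ^ 2)
    = (1 - θ) * (1 / η - lam) * ((sk - skm) * (sk1 - sk))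
      - (1 / η - lam / 2) * (sk1 - sk) ^ 2 - (sk1 - sk) * e := by
  subst h1; field_simp; ring

theorem termbd_aux (η θ lam P D E : ℝ) (hη0 : 0 < η) (hθ0 : 0 < θ)
    (h1θ : 0 ≤ 1 - θ) (hc0 : 0 ≤ 1 / η - lam) :
    (1 - θ) * (1 / η - lam) * (P * D) - (1 / η - lam / 2) * D ^ 2 - D * E
    ≤ (1 - θ) * (1 / η - lam) / 2 * P ^ 2
      + ((1 - θ) * (1 / η - lam) / 2 - (1 / η - lam / 2) + θ / (8 * η)) * D ^ 2
      + (2 * η / θ) * E ^ 2 := by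
  have key : θ / (8 * η) * D ^ 2 + (2 * η / θ) * E ^ 2 + D * E
      = (θ * D + 4 * η * E) ^ 2 / (8 * (η * θ)) := by field_simp; ring
  have k2 : 0 ≤ θ / (8 * η) * D ^ 2 + (2 * η / θ) * E ^ 2 + D * E := by
    rw [key]; positivity
  nlinarith [mul_nonneg (mul_nonneg h1θ hc0) (sq_nonneg (P - D)), k2]

/-- Aggregated guarantee of inexact accelerated gradient descent on a
one-dimensional quadratic anchored at `s⁰` in the mild-curvature regime
`-θ/η ≤ λ ≤ l`.  The convention `s⁻¹ = s⁰` is encoded through truncated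
subtraction: `s (k - 1) = s 0` when `k = 0`. -/
theorem agd_aggregate_mild (l η θ lam a : ℝ)
    (hl : 0 < l) (hη : η = 1 / (4 * l)) (hθ0 : 0 < θ) (hθ1 : θ ≤ 1)
    (hlam1 : -(θ / η) ≤ lam) (hlam2 : lam ≤ l)
    (s y ε : ℕ → ℝ)
    (h h' : ℝ → ℝ)
    (hdef : ∀ z, h z = a * (z - s 0) + (lam / 2) * (z - s 0) ^ 2)
    (h'def : ∀ z, h' z = a + lam * (z - s 0))
    (hy : ∀ k, y k = s k + (1 - θ) * (s k - s (k - 1)))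
    (hsucc : ∀ k, s (k + 1) = y k - η * h' (y k) - η * ε k)
    (N : ℕ) (hN : 1 ≤ N) :
    h (s N) ≤ -(3 * θ / (8 * η)) * ∑ k ∈ Finset.range N, (s (k + 1) - s k) ^ 2
      + (2 * η / θ) * ∑ k ∈ Finset.range N, (ε k) ^ 2 := by
  have hη0 : 0 < η := by rw [hη]; positivity
  have hηne : η ≠ 0 := ne_of_gt hη0
  have hinv : 1 / η = 4 * l := by rw [hη]; field_simp
  have hc0 : 0 ≤ 1 / η - lam := by rw [hinv]; nlinarith
  have h1θ : 0 ≤ 1 - θ := by linarith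
  -- per-step identity
  have step : ∀ k : ℕ, h (s (k + 1)) - h (s k)
      = (1 - θ) * (1 / η - lam) * ((s k - s (k - 1)) * (s (k + 1) - s k))
        - (1 / η - lam / 2) * (s (k + 1) - s k) ^ 2 - (s (k + 1) - s k) * ε k := by
    intro k
    have h1 := hsucc k
    rw [hy k, h'def] at h1
    rw [hdef (s (k + 1)), hdef (s k)]
    exact step_aux η θ lam a (s 0) (s (k - 1)) (s k) (s (k + 1)) (ε k) hηne h1
  have h0 : h (s 0) = 0 := by rw [hdef]; ring
  have htel := Finset.sum_range_sub (fun k => h (s k)) N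
  have hsumeq : h (s N) = ∑ k ∈ Finset.range N,
      ((1 - θ) * (1 / η - lam) * ((s k - s (k - 1)) * (s (k + 1) - s k))
        - (1 / η - lam / 2) * (s (k + 1) - s k) ^ 2 - (s (k + 1) - s k) * ε k) := by
    rw [← Finset.sum_congr rfl (fun k _ => step k), htel, h0, sub_zero]
  set C1 : ℝ := (1 - θ) * (1 / η - lam) / 2 with hC1
  set K : ℝ := (1 - θ) * (1 / η - lam) / 2 - (1 / η - lam / 2) + θ / (8 * η) with hK
  have hsum_le : h (s N)
      ≤ C1 * ∑ k ∈ Finset.range N, (s k - s (k - 1)) ^ 2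
        + K * ∑ k ∈ Finset.range N, (s (k + 1) - s k) ^ 2
        + (2 * η / θ) * ∑ k ∈ Finset.range N, ε k ^ 2 := by
    rw [hsumeq, Finset.mul_sum, Finset.mul_sum, Finset.mul_sum,
      ← Finset.sum_add_distrib, ← Finset.sum_add_distrib]
    exact Finset.sum_le_sum fun k _ =>
      termbd_aux η θ lam (s k - s (k - 1)) (s (k + 1) - s k) (ε k) hη0 hθ0 h1θ hc0
  have hS1 : ∑ k ∈ Finset.range N, (s k - s (k - 1)) ^ 2
      ≤ ∑ k ∈ Finset.range N, (s (k + 1) - s k) ^ 2 := by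
    obtain ⟨n, rfl⟩ : ∃ n, N = n + 1 := ⟨N - 1, (Nat.succ_pred_eq_of_pos hN).symm⟩
    rw [Finset.sum_range_succ' (fun k => (s k - s (k - 1)) ^ 2) n,
      Finset.sum_range_succ (fun k => (s (k + 1) - s k) ^ 2) n]
    simp only [Nat.add_sub_cancel, Nat.zero_sub, sub_self, ne_eq, OfNat.ofNat_ne_zero,
      not_false_eq_true, zero_pow, add_zero]
    linarith [sq_nonneg (s (n + 1) - s n)]
  have hC10 : 0 ≤ C1 := by rw [hC1]; positivity
  have hS20 : 0 ≤ ∑ k ∈ Finset.range N, (s (k + 1) - s k) ^ 2 :=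
    Finset.sum_nonneg fun k _ => sq_nonneg _
  have coef : C1 + K ≤ -(3 * θ / (8 * η)) := by
    have hθη : θ / η = 4 * l * θ := by rw [hη]; field_simp
    have hlam1' : -(4 * l * θ) ≤ lam := by rw [← hθη]; exact hlam1
    have h8η : θ / (8 * η) = l * θ / 2 := by rw [hη]; field_simp; ring
    have h38 : 3 * θ / (8 * η) = 3 * (l * θ) / 2 := by rw [hη]; field_simp; ring
    rw [hC1, hK, hinv, h8η, h38]
    exact coef_aux l θ lam hl hθ0 hθ1 hlam1' hlam2
  have h2 := mul_le_mul_of_nonneg_right coef hS20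
  have h3 : (C1 + K) * ∑ k ∈ Finset.range N, (s (k + 1) - s k) ^ 2
      = C1 * ∑ k ∈ Finset.range N, (s (k + 1) - s k) ^ 2
        + K * ∑ k ∈ Finset.range N, (s (k + 1) - s k) ^ 2 :=
    add_mul _ _ _
  have h4 := mul_le_mul_of_nonneg_left hS1 hC10
  linarith
end

section
/- Let l > 0, η = 1/(4l), θ ∈ (0,1], B > 0, and let λ be a real number with −l ≤ λ < −θ/η. Let h : ℝ → ℝ be the quadratic h(z) = a(z − s^0) + (λ/2)(z − s^0)² for some real a, with derivative h'(z) = a + λ(z − s^0). Let (ε^k)_{k ≥ 0} be real error terms, set s^{−1} = s^0, and define y^k = s^k + (1 − θ)(s^k − s^{k−1}) and s^{k+1} = y^k − η h'(y^k) − η ε^k for k ≥ 0. Then for every k ≥ 0, h(s^{k+1}) − h(s^k) ≤ −(θ/(2η)) · (s^{k+1} − s^k)² + η (ε^0)² + (ε^0)²/(2B^{3/2}) + (B^{3/2}/2) · (s^1 − y^0)² + (η/2) · ∑_{t=1}^{k} (1 − θ)^{k−t} (ε^t)². -/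
private lemma agd_base_arith (η b e a : ℝ) (hη0 : 0 < η) (hb : 0 < b) :
    -(η * (η * e ^ 2 + e ^ 2 / (2 * b) + (b / 2) * (-(η * (a + e))) ^ 2))
      ≤ η ^ 2 * a ^ 2 + η ^ 2 * e * a := by
  have key : -(η * e * (a + e)) ≤ e ^ 2 / (2 * b) + (b / 2) * (-(η * (a + e))) ^ 2 := by
    rw [← sub_nonneg]
    have heq : e ^ 2 / (2 * b) + (b / 2) * (-(η * (a + e))) ^ 2 - -(η * e * (a + e))
        = (e + b * (η * (a + e))) ^ 2 / (2 * b) := by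
      field_simp
      ring
    rw [heq]
    exact div_nonneg (sq_nonneg _) (by linarith)
  have h7 := mul_le_mul_of_nonneg_left key hη0.le
  linarith [h7, sq_nonneg (η * a)]

private lemma agd_step_arith (η θ c M W E Sj Sj1 : ℝ)
    (hη0 : 0 < η) (hθ0 : 0 < θ) (hθ1 : θ ≤ 1) (hc0 : 0 < c) (hc2 : c ≤ 1 / 4)
    (ih : -(η * Sj) ≤ c * (M * W))
    (hS : (1 - θ) * Sj + (η / 2) * E ^ 2 ≤ Sj1) :
    -(η * Sj1) ≤ c * (((1 + c) * (1 - θ) * M + c * (W + M) - η * E) * (W + M)) := by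
  have hβ0 : (0 : ℝ) ≤ 1 - θ := by linarith
  have f1 := mul_le_mul_of_nonneg_left ih hβ0
  have f2 : -((3 / 2 : ℝ) * M ^ 2 + (W + M) ^ 2 / 2) ≤ M * W := by
    nlinarith [sq_nonneg (W + 2 * M)]
  have f3 := mul_le_mul_of_nonneg_left f2
    (mul_nonneg (sq_nonneg c) hβ0 : (0 : ℝ) ≤ c ^ 2 * (1 - θ))
  have f4 : (0 : ℝ) ≤ (c * (W + M) - η * E) ^ 2 := sq_nonneg _
  have f5 : (0 : ℝ) ≤ c * (1 - θ) * (2 - c) * M ^ 2 :=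
    mul_nonneg (mul_nonneg (mul_nonneg hc0.le hβ0) (by linarith)) (sq_nonneg _)
  have f6 : (0 : ℝ) ≤ θ * (c * (W + M)) ^ 2 := mul_nonneg hθ0.le (sq_nonneg _)
  have f7 := mul_le_mul_of_nonneg_left hS hη0.le
  nlinarith [f1, f3, f4, f5, f6, f7]

/-- One-step estimate for inexact accelerated gradient descent on a
one-dimensional quadratic with strongly negative curvature `λ < -θ/η`, anchored
at the starting point `s⁰`.  The convention `s⁻¹ = s⁰` is encoded through
truncated subtraction: `s (k - 1) = s 0` when `k = 0`. -/
theorem agd_one_step_negative (l η θ B lam a : ℝ)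
    (hl : 0 < l) (hη : η = 1 / (4 * l)) (hθ0 : 0 < θ) (hθ1 : θ ≤ 1) (hB : 0 < B)
    (hlam1 : -l ≤ lam) (hlam2 : lam < -(θ / η))
    (s y ε : ℕ → ℝ)
    (h h' : ℝ → ℝ)
    (hdef : ∀ z, h z = a * (z - s 0) + (lam / 2) * (z - s 0) ^ 2)
    (h'def : ∀ z, h' z = a + lam * (z - s 0))
    (hy : ∀ k, y k = s k + (1 - θ) * (s k - s (k - 1)))
    (hsucc : ∀ k, s (k + 1) = y k - η * h' (y k) - η * ε k)
    (k : ℕ) :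
    h (s (k + 1)) - h (s k) ≤ -(θ / (2 * η)) * (s (k + 1) - s k) ^ 2
      + η * (ε 0) ^ 2 + (ε 0) ^ 2 / (2 * B ^ ((3 : ℝ) / 2))
      + (B ^ ((3 : ℝ) / 2) / 2) * (s 1 - y 0) ^ 2
      + (η / 2) * ∑ t ∈ Finset.Icc 1 k, (1 - θ) ^ (k - t) * (ε t) ^ 2 := by
  have hη0 : 0 < η := by rw [hη]; positivity
  have hlamneg0 : -(θ / η) < 0 := by
    have : 0 < θ / η := div_pos hθ0 hη0
    linarith
  have hlamneg : lam < 0 := lt_trans hlam2 hlamneg0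
  have hlamne : lam ≠ 0 := ne_of_lt hlamneg
  obtain ⟨b, hbdef⟩ : ∃ b : ℝ, b = B ^ ((3 : ℝ) / 2) := ⟨_, rfl⟩
  have hb : 0 < b := hbdef ▸ Real.rpow_pos_of_pos hB _
  obtain ⟨c, hcdef⟩ : ∃ c : ℝ, c = -(η * lam) := ⟨_, rfl⟩
  have hc1 : θ < c := by
    rw [hcdef]
    have h1 := mul_lt_mul_of_pos_left hlam2 hη0
    rw [mul_neg] at h1
    have h2 : η * (θ / η) = θ := by field_simp
    linarith
  have hc2 : c ≤ 1 / 4 := by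
    rw [hcdef]
    have hηl : η * l = 1 / 4 := by rw [hη]; field_simp
    have h1 := mul_le_mul_of_nonneg_left hlam1 hη0.le
    rw [mul_neg] at h1
    linarith
  have hc0 : 0 < c := lt_trans hθ0 hc1
  obtain ⟨w, hwdef⟩ : ∃ w : ℕ → ℝ, w = fun j => s j - s 0 + a / lam := ⟨_, rfl⟩
  obtain ⟨m, hmdef⟩ : ∃ m : ℕ → ℝ, m = fun j => s (j + 1) - s j := ⟨_, rfl⟩
  obtain ⟨S, hSdef⟩ : ∃ S : ℕ → ℝ, S = fun j =>
      (η * (ε 0) ^ 2 + (ε 0) ^ 2 / (2 * b) + (b / 2) * (s 1 - y 0) ^ 2)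
      + (η / 2) * ∑ t ∈ Finset.Icc 1 j, (1 - θ) ^ (j - t) * (ε t) ^ 2 := ⟨_, rfl⟩
  -- basic identities
  have hy0 : y 0 = s 0 := by have := hy 0; simpa using this
  have h'y0 : h' (y 0) = a := by rw [h'def, hy0]; ring
  have hs1 : s 1 = s 0 - η * a - η * ε 0 := by
    have := hsucc 0; rw [h'y0, hy0] at this; linarith
  have hs1y0 : s 1 - y 0 = -(η * (a + ε 0)) := by rw [hs1, hy0]; ring
  have hwsucc : ∀ j, w (j + 1) = w j + m j := by
    intro j; simp only [hwdef, hmdef]; ring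
  have hm0 : m 0 = c * w 0 - η * ε 0 := by
    simp only [hmdef, hwdef, hcdef, Nat.zero_add]
    rw [hs1]
    field_simp
    ring
  have hmsucc : ∀ j, m (j + 1) = (1 + c) * (1 - θ) * m j + c * (w j + m j) - η * ε (j + 1) := by
    intro j
    have hyj : y (j + 1) = s (j + 1) + (1 - θ) * (s (j + 1) - s j) := by
      have := hy (j + 1); simpa using this
    simp only [hmdef, hwdef, hcdef]
    rw [hsucc (j + 1), h'def, hyj]
    field_simp
    ring
  have hCnn : (0 : ℝ) ≤ η * (ε 0) ^ 2 + (ε 0) ^ 2 / (2 * b) + (b / 2) * (s 1 - y 0) ^ 2 := by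
    have h1 : (0 : ℝ) ≤ (ε 0) ^ 2 / (2 * b) := div_nonneg (sq_nonneg _) (by linarith)
    have h2 : (0 : ℝ) ≤ (b / 2) * (s 1 - y 0) ^ 2 := mul_nonneg (by linarith) (sq_nonneg _)
    have h3 : (0 : ℝ) ≤ η * (ε 0) ^ 2 := mul_nonneg hη0.le (sq_nonneg _)
    linarith
  have hSsucc : ∀ j, (1 - θ) * S j + (η / 2) * (ε (j + 1)) ^ 2 ≤ S (j + 1) := by
    intro j
    have hsplit : ∑ t ∈ Finset.Icc 1 (j + 1), (1 - θ) ^ (j + 1 - t) * (ε t) ^ 2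
        = (1 - θ) * ∑ t ∈ Finset.Icc 1 j, (1 - θ) ^ (j - t) * (ε t) ^ 2 + (ε (j + 1)) ^ 2 := by
      rw [Finset.sum_Icc_succ_top (by omega : 1 ≤ j + 1), Finset.mul_sum]
      congr 1
      · apply Finset.sum_congr rfl
        intro t ht
        have htj : t ≤ j := (Finset.mem_Icc.mp ht).2
        have hjt : j + 1 - t = (j - t) + 1 := by omega
        rw [hjt, pow_succ]
        ring
      · simp
    simp only [hSdef]
    rw [hsplit]
    nlinarith [mul_nonneg hθ0.le hCnn]
  -- the key invariant
  have key : ∀ j, -(η * S j) ≤ c * (m j * w j) := by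
    intro j
    induction j with
    | zero =>
      have hS0 : S 0 = η * (ε 0) ^ 2 + (ε 0) ^ 2 / (2 * b) + (b / 2) * (s 1 - y 0) ^ 2 := by
        simp [hSdef]
      have hb0 : c * (m 0 * w 0) = η ^ 2 * a ^ 2 + η ^ 2 * (ε 0) * a := by
        rw [hm0]
        simp only [hwdef, hcdef]
        field_simp
        ring
      rw [hS0, hb0, hs1y0]
      exact agd_base_arith η b (ε 0) a hη0 hb
    | succ j ih =>
      rw [hmsucc j, hwsucc j]
      exact agd_step_arith η θ c (m j) (w j) (ε (j + 1)) (S j) (S (j + 1))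
        hη0 hθ0 hθ1 hc0 hc2 ih (hSsucc j)
  -- conclusion
  have hkey := key k
  have hLHS : h (s (k + 1)) - h (s k) = lam / 2 * ((w (k + 1)) ^ 2 - (w k) ^ 2) := by
    rw [hdef (s (k + 1)), hdef (s k)]
    simp only [hwdef]
    field_simp
    ring
  have hq : -c * (2 * w k * m k + (m k) ^ 2) ≤ -θ * (m k) ^ 2 + 2 * η * S k := by
    linarith [hkey, mul_nonneg (sub_nonneg.mpr hc1.le) (sq_nonneg (m k))]
  have heq2 : lam / 2 * ((w (k + 1)) ^ 2 - (w k) ^ 2)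
      = (1 / (2 * η)) * (-c * (2 * w k * m k + (m k) ^ 2)) := by
    rw [hwsucc k, hcdef]
    field_simp
    ring
  have hstep : lam / 2 * ((w (k + 1)) ^ 2 - (w k) ^ 2) ≤ -(θ / (2 * η)) * (m k) ^ 2 + S k := by
    rw [heq2]
    have h8 := mul_le_mul_of_nonneg_left hq (by positivity : (0 : ℝ) ≤ 1 / (2 * η))
    have heq3 : (1 / (2 * η)) * (-θ * (m k) ^ 2 + 2 * η * S k)
        = -(θ / (2 * η)) * (m k) ^ 2 + S k := by
      field_simp
    linarith [heq3 ▸ h8]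
  rw [hLHS]
  refine le_trans hstep (le_of_eq ?_)
  simp only [hSdef, hmdef, hbdef]
  ring
end

section
/- Let l > 0, η = 1/(4l), θ ∈ (0,1], B > 0, E₀ ≥ 0, E₁ ≥ 0, and let λ be a real number with −l ≤ λ < −θ/η. Let h : ℝ → ℝ be the quadratic h(z) = a(z − s^0) + (λ/2)(z − s^0)² for some real a, with derivative h'(z) = a + λ(z − s^0). Let (ε^k)_{k ≥ 0} be real error terms with |ε^0| ≤ E₀ and |ε^k| ≤ E₁ for all k ≥ 1, set s^{−1} = s^0, and define y^k = s^k + (1 − θ)(s^k − s^{k−1}) and s^{k+1} = y^k − η h'(y^k) − η ε^k for k ≥ 0. Then for every natural number N ≥ 1, h(s^N) ≤ −(θ/(2η)) · ∑_{k=0}^{N−1} (s^{k+1} − s^k)² + N·(η E₀² + E₀²/(2B^{3/2}) + (B^{3/2}/2)(s^1 − y^0)²) + (η N E₁²)/(2θ). -/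
private lemma key_quad (γ m X Z : ℝ) (hγ0 : 0 < γ) (hγ4 : γ ≤ 1/4)
    (hm1 : 1 - γ^2 ≤ m) (hm2 : m ≤ 1 + γ) (hZ : 0 ≤ Z) (hZX : Z ≤ X) :
    m*Z*(X-Z) - γ/2*Z^2 ≤ (1-γ)*(X*(X-Z)) := by
  rcases le_or_gt m (1 - 2*γ) with hc | hc
  · nlinarith [mul_nonneg (mul_nonneg (sub_nonneg.2 hZX) hZ) hγ0.le,
      mul_nonneg (sub_nonneg.2 hZX) (sub_nonneg.2 hZX),
      mul_nonneg (mul_nonneg (sub_nonneg.2 hZX) (by linarith : (0:ℝ) ≤ X)) (by linarith : (0:ℝ) ≤ 1 - 2*γ - m)]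
  · have hdisc : (m + 2*γ - 1)^2 ≤ 2*γ*m + γ^2 := by
      nlinarith [mul_nonneg (by nlinarith : (0:ℝ) ≤ m - (1 - γ^2)) (by nlinarith : (0:ℝ) ≤ 1 + γ - m)]
    have ha : (0:ℝ) < m + γ/2 := by nlinarith
    nlinarith [sq_nonneg (2*(m+γ/2)*(X-Z) + (1-2*γ-m)*X), mul_nonneg (by linarith : (0:ℝ) ≤ 2*γ*m + γ^2 - (m+2*γ-1)^2) (sq_nonneg X), ha]

-- one abstract step of the invariant, nonnegative-w case
set_option maxHeartbeats 1600000 in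
private lemma presStep (θ γ E1 bud m w D : ℝ)
    (hθ0 : 0 < θ) (hθγ : θ < γ) (hγ4 : γ ≤ 1/4)
    (hE1 : 0 ≤ E1) (hbudE : E1^2 ≤ 2*θ*bud) (hbud0 : 0 ≤ bud)
    (hm : m = (1+γ)*(1-θ)) (hw : 0 ≤ w)
    (hAD : 0 ≤ D ∨ γ*w*(-D) ≤ bud) :
    γ * |w + D| * E1 - bud ≤ γ*(w+D)*(γ*w+(γ+m)*D) := by
  have hγ0 : 0 < γ := lt_trans hθ0 hθγ
  have hθ4 : θ < 1/4 := lt_of_lt_of_le hθγ hγ4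
  have hm1 : 1 - γ^2 ≤ m := by rw [hm]; nlinarith
  have hm2 : m ≤ 1 + γ := by rw [hm]; nlinarith
  have hm0 : 0 < m := by nlinarith
  have hE1b : 2*E1^2 ≤ bud := by nlinarith
  rcases le_or_gt 0 D with hD0 | hD0
  · -- D ≥ 0
    have hZ0 : 0 ≤ w + D := by linarith
    rw [abs_of_nonneg hZ0]
    rcases le_or_gt E1 (γ*w+(γ+m)*D) with hq' | hq'
    · nlinarith [mul_nonneg (mul_nonneg hγ0.le hZ0) (sub_nonneg.2 hq'), hbud0]
    · have h1 : γ*w ≤ E1 := by nlinarith [mul_nonneg (by linarith : (0:ℝ) ≤ γ+m) hD0]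
      have h2 : γ*D ≤ E1 := by nlinarith [mul_nonneg (by linarith : (0:ℝ) ≤ m) hD0]
      have h3 : 0 ≤ γ*(w+D)*(γ*w+(γ+m)*D) := by
        apply mul_nonneg (mul_nonneg hγ0.le hZ0)
        nlinarith [mul_nonneg (by linarith : (0:ℝ) ≤ γ+m) hD0]
      nlinarith [mul_le_mul_of_nonneg_right h1 hE1, mul_le_mul_of_nonneg_right h2 hE1, h3]
  · have hcon : γ*w*(-D) ≤ bud := by
      rcases hAD with h | h
      · linarith
      · exact h
    rcases le_or_gt 0 (w + D) with hZ0 | hZ0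
    · -- A2a : D < 0, w + D ≥ 0
      rw [abs_of_nonneg hZ0]
      rcases le_or_gt E1 (γ*w+(γ+m)*D) with hq' | hq'
      · nlinarith [mul_nonneg (mul_nonneg hγ0.le hZ0) (sub_nonneg.2 hq'), hbud0]
      · have hZX : w + D ≤ w := by linarith
        have h1 : γ*(w+D)*E1 ≤ γ^2/2*(w+D)^2 + E1^2/2 := by
          nlinarith [sq_nonneg (γ*(w+D) - E1)]
        have h2 : E1^2/2 ≤ γ*bud := by nlinarith
        have h3 : m*(w+D)*(w-(w+D)) - γ/2*(w+D)^2 ≤ (1-γ)*(w*(w-(w+D))) :=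
          key_quad γ m w (w+D) hγ0 hγ4 hm1 hm2 hZ0 hZX
        have h4 : (1-γ)*(γ*(w*(w-(w+D)))) ≤ (1-γ)*bud := by
          apply mul_le_mul_of_nonneg_left _ (by linarith : (0:ℝ) ≤ 1-γ)
          nlinarith [hcon]
        nlinarith [mul_le_mul_of_nonneg_left h3 hγ0.le, h1, h2, h4]
    · -- A2b : D < 0, w + D < 0
      rw [abs_of_nonpos hZ0.le]
      rcases le_or_gt E1 (m*w + (γ+m)*(-(w+D))) with hbr | hbr
      · nlinarith [mul_le_mul_of_nonneg_left hbr
          (mul_nonneg hγ0.le (by linarith : (0:ℝ) ≤ -(w+D))), hbud0]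
      · have h1 : γ*(-(w+D)) ≤ E1 := by nlinarith [mul_nonneg hm0.le hw]
        have h2 : 0 ≤ γ*(-(w+D))*(m*w + (γ+m)*(-(w+D))) := by
          apply mul_nonneg (mul_nonneg hγ0.le (by linarith))
          nlinarith [mul_nonneg hm0.le hw]
        nlinarith [mul_le_mul_of_nonneg_right h1 hE1, h2]

private lemma base_quad (γ m X Y : ℝ) (hγ0 : 0 < γ) (hγ4 : γ ≤ 1/4)
    (hm1 : 1 - γ^2 ≤ m) (hm2 : m ≤ 1 + γ) :
    0 ≤ 2*m*(1+γ)*X^2 - (3*m-1)*X*Y + Y^2 := by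
  have hm15 : (15:ℝ)/16 ≤ m := by nlinarith
  have hdisc : (3*m-1)^2 ≤ 8*m^2 := by nlinarith
  nlinarith [sq_nonneg (4*m^2*X - (3*m-1)*Y), mul_nonneg (by linarith : (0:ℝ) ≤ 8*m^2 - (3*m-1)^2) (sq_nonneg Y), sq_nonneg X, mul_nonneg (mul_nonneg (by nlinarith : (0:ℝ) ≤ 2*m) (by nlinarith : (0:ℝ) ≤ 1 + γ - m)) (sq_nonneg X), sq_nonneg (m*X), hm15]

private lemma presA (θ γ E1 bud m w q e : ℝ)
    (hθ0 : 0 < θ) (hθγ : θ < γ) (hγ4 : γ ≤ 1/4)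
    (hE1 : 0 ≤ E1) (hbudE : E1^2 ≤ 2*θ*bud) (hbud0 : 0 ≤ bud)
    (hm : m = (1+γ)*(1-θ)) (he : |e| ≤ E1)
    (hA : γ * |w| * E1 - bud ≤ γ*w*q) :
    γ * |w + (q-e)| * E1 - bud ≤ γ*(w+(q-e))*(γ*w+(γ+m)*(q-e)) := by
  have hγ0 : 0 < γ := lt_trans hθ0 hθγ
  have heE : e ≤ E1 := le_trans (le_abs_self e) he
  have heE' : -E1 ≤ e := neg_le_of_abs_le he
  rcases le_or_gt 0 w with hw | hw
  · have habsw : |w| = w := abs_of_nonneg hw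
    apply presStep θ γ E1 bud m w (q-e) hθ0 hθγ hγ4 hE1 hbudE hbud0 hm hw
    rcases le_or_gt 0 (q-e) with h | h
    · exact Or.inl h
    · right
      have h1 : γ*w*e ≤ γ*w*E1 := mul_le_mul_of_nonneg_left heE (mul_nonneg hγ0.le hw)
      rw [habsw] at hA; nlinarith
  · have habsw : |w| = -w := abs_of_neg hw
    have hA' : γ * |(-w)| * E1 - bud ≤ γ*(-w)*(-q) := by
      rw [abs_neg]
      have : γ*(-w)*(-q) = γ*w*q := by ring
      rw [this]; exact hA
    have h := presStep θ γ E1 bud m (-w) (-(q-e)) hθ0 hθγ hγ4 hE1 hbudE hbud0 hm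
      (by linarith) ?_
    · have he1 : -w + -(q-e) = -(w + (q-e)) := by ring
      rw [he1, abs_neg] at h
      have he2 : γ*(-(w+(q-e)))*(γ*(-w)+(γ+m)*(-(q-e)))
          = γ*(w+(q-e))*(γ*w+(γ+m)*(q-e)) := by ring
      rw [he2] at h
      exact h
    · rcases le_or_gt 0 (-(q-e)) with h | h
      · exact Or.inl h
      · right
        have h1 : γ*((-w)*(-e)) ≤ γ*((-w)*E1) := by
          apply mul_le_mul_of_nonneg_left _ hγ0.le
          apply mul_le_mul_of_nonneg_left _ (by linarith : (0:ℝ) ≤ -w)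
          linarith
        rw [habsw] at hA; nlinarith


set_option maxHeartbeats 1600000 in
private lemma baseInv (θ γ E0 E1 bud m w0 w1 d1 e0 : ℝ)
    (hθ0 : 0 < θ) (hθγ : θ < γ) (hγ4 : γ ≤ 1/4)
    (hE0 : 0 ≤ E0) (hE1 : 0 ≤ E1)
    (hm : m = (1+γ)*(1-θ)) (he0 : |e0| ≤ E0)
    (hd1 : d1 = γ*w0 - e0) (hw1 : w1 = w0 + d1)
    (hbud : bud = E0^2 + E0 * |d1| + E1^2/(2*θ)) :
    γ * |w1| * E1 - bud ≤ γ*w1*(γ*w1 + m*d1) := by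
  have hγ0 : 0 < γ := lt_trans hθ0 hθγ
  have hθ4 : θ < 1/4 := lt_of_lt_of_le hθγ hγ4
  have hm1 : 1 - γ^2 ≤ m := by rw [hm]; nlinarith
  have hm2 : m ≤ 1 + γ := by rw [hm]; nlinarith
  have hm0 : 0 < m := by nlinarith
  have hu : γ*w1 = (1+γ)*d1 + e0 := by rw [hw1, hd1]; ring
  have habs : γ * |w1| = |(1+γ)*d1 + e0| := by
    rw [← hu, abs_mul, abs_of_pos hγ0]
  have hCb : E0^2 + E0 * |d1| ≤ bud := by
    have h0 : 0 ≤ E1^2/(2*θ) := by positivity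
    rw [hbud]; linarith
  have hEE : E1^2 = 2*θ*(bud - (E0^2 + E0 * |d1|)) := by
    rw [hbud]
    have hθne : (2*θ) ≠ 0 := by positivity
    field_simp
    ring
  have young : |(1+γ)*d1 + e0| * E1
      ≤ θ*(|(1+γ)*d1+e0|)^2 + (bud - (E0^2+E0 * |d1|))/2 := by
    have h4θ : (0:ℝ) < 4*θ := by linarith
    have key : 4*θ*(|(1+γ)*d1 + e0| * E1)
        ≤ 4*θ*(θ*(|(1+γ)*d1+e0|)^2 + (bud - (E0^2+E0 * |d1|))/2) := by
      nlinarith [sq_nonneg (2*θ*|(1+γ)*d1+e0| - E1), hEE]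
    exact (mul_le_mul_iff_right₀ h4θ).mp key
  have habs2 : θ*(|(1+γ)*d1+e0|)^2 = θ*((1+γ)*d1+e0)^2 := by rw [sq_abs]
  have hde : -(|d1| * E0) ≤ d1*e0 := by
    have h1 : |d1*e0| ≤ |d1| * E0 := by
      rw [abs_mul]; exact mul_le_mul_of_nonneg_left he0 (abs_nonneg d1)
    linarith [neg_abs_le (d1*e0)]
  have bq := base_quad γ m |d1| E0 hγ0 hγ4 hm1 hm2
  have hident : (1-θ)*((1+γ)*d1+e0)^2 + m*(((1+γ)*d1+e0)*d1)
      = 2*m*(1+γ)*d1^2 + 3*m*(d1*e0) + (1-θ)*e0^2 := by rw [hm]; ring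
  have f1 : 3*m*(-(|d1| * E0)) ≤ 3*m*(d1*e0) :=
    mul_le_mul_of_nonneg_left hde (by linarith : (0:ℝ) ≤ 3*m)
  have f2 : 0 ≤ (1-θ)*e0^2 :=
    mul_nonneg (by linarith : (0:ℝ) ≤ 1-θ) (sq_nonneg e0)
  have f4 : 2*m*(1+γ)*d1^2 = 2*m*(1+γ)*(|d1|)^2 := by rw [sq_abs]
  have step : 0 ≤ (1-θ)*((1+γ)*d1+e0)^2 + m*(((1+γ)*d1+e0)*d1)
      + (E0^2 + E0 * |d1|) := by
    linarith [bq, hident, f1, f2, f4, abs_nonneg d1]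
  rw [habs, hu]
  linarith [young, hCb, step, habs2]

private theorem coreSum (θ γ E0 E1 : ℝ) (e w d : ℕ → ℝ)
    (hθ0 : 0 < θ) (hθγ : θ < γ) (hγ4 : γ ≤ 1/4)
    (hE0 : 0 ≤ E0) (hE1 : 0 ≤ E1)
    (he0 : |e 0| ≤ E0) (hek : ∀ k, 1 ≤ k → |e k| ≤ E1)
    (hd0 : d 0 = 0)
    (hrec : ∀ k, d (k+1) = γ * w k + ((1+γ)*(1-θ)) * d k - e k)
    (hwrec : ∀ k, w (k+1) = w k + d (k+1)) :
    ∀ N : ℕ, θ/2 * ∑ k ∈ Finset.range N, (d (k+1))^2 - γ/2*((w N)^2 - (w 0)^2)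
      ≤ N * (E0^2 + E0 * |d 1| + E1^2/(2*θ)) := by
  have hγ0 : 0 < γ := lt_trans hθ0 hθγ
  obtain ⟨m, hm⟩ : ∃ m : ℝ, m = (1+γ)*(1-θ) := ⟨_, rfl⟩
  obtain ⟨bud, hbud⟩ : ∃ b : ℝ, b = E0^2 + E0 * |d 1| + E1^2/(2*θ) := ⟨_, rfl⟩
  rw [← hm] at hrec
  have hgoal : ∀ N : ℕ, (N:ℝ) * (E0^2 + E0 * |d 1| + E1^2/(2*θ)) = N * bud := by
    intro N; rw [hbud]
  refine fun N => (hgoal N) ▸ ?_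
  have hbud0 : 0 ≤ bud := by
    have h1 : 0 ≤ E1^2/(2*θ) := by positivity
    have h2 : 0 ≤ E0 * |d 1| := mul_nonneg hE0 (abs_nonneg _)
    rw [hbud]; positivity
  have hbudE : E1^2 ≤ 2*θ*bud := by
    have h1 : 2*θ*(E1^2/(2*θ)) = E1^2 := by field_simp
    have h2 : 0 ≤ E0 * |d 1| := mul_nonneg hE0 (abs_nonneg _)
    rw [hbud]; nlinarith [mul_nonneg hθ0.le (mul_nonneg hE0 hE0)]
  -- the invariant
  have hinv : ∀ k, γ * |w (k+1)| * E1 - bud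
      ≤ γ*(w (k+1))*(γ*(w (k+1)) + m*(d (k+1))) := by
    intro k
    induction k with
    | zero =>
      refine baseInv θ γ E0 E1 bud m (w 0) (w 1) (d 1) (e 0)
        hθ0 hθγ hγ4 hE0 hE1 hm he0 ?_ (hwrec 0) hbud
      rw [hrec 0, hd0]; ring
    | succ n ih =>
      have hkE : |e (n+1)| ≤ E1 := hek (n+1) (by omega)
      have h := presA θ γ E1 bud m (w (n+1)) (γ*(w (n+1)) + m*(d (n+1))) (e (n+1))
        hθ0 hθγ hγ4 hE1 hbudE hbud0 hm hkE ih
      rw [hwrec (n+1), hrec (n+1)]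
      have hexp : γ*(w (n+1)+(γ*(w (n+1)) + m*(d (n+1))-e (n+1)))*
            (γ*(w (n+1))+(γ+m)*(γ*(w (n+1)) + m*(d (n+1))-e (n+1)))
          = γ*(w (n+1)+(γ * w (n+1) + m * d (n+1)-e (n+1)))*
            (γ*(w (n+1)+(γ * w (n+1) + m * d (n+1)-e (n+1)))
              + m*(γ * w (n+1) + m * d (n+1)-e (n+1))) := by ring
      rw [hexp] at h
      exact h
  -- per-step inequality
  have hstep : ∀ k, θ/2*(d (k+1))^2 - γ/2*((w (k+1))^2 - (w k)^2) ≤ bud := by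
    intro k
    have f5 : 0 ≤ (γ-θ)*(d (k+1))^2 :=
      mul_nonneg (by linarith) (sq_nonneg _)
    cases k with
    | zero =>
      have hd1 : d 1 = γ*(w 0) - e 0 := by rw [hrec 0, hd0]; ring
      have h3 : γ*(w 0) = d 1 + e 0 := by linarith [hd1]
      have h4 : γ*(w 0)*(d 1) = (d 1 + e 0)*(d 1) := by rw [h3]
      have h1 : |e 0 * d 1| ≤ E0 * |d 1| := by
        rw [abs_mul]; exact mul_le_mul_of_nonneg_right he0 (abs_nonneg _)
      have h2 : -(e 0 * d 1) ≤ E0 * |d 1| := by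
        linarith [neg_abs_le (e 0 * d 1)]
      have hbb : E0 * |d 1| ≤ bud := by
        have hq : 0 ≤ E1^2/(2*θ) := by positivity
        rw [hbud]; nlinarith
      rw [hwrec 0]
      simp only [Nat.reduceAdd, Nat.zero_add]
      nlinarith [h4, h2, hbb, f5]
    | succ n =>
      have hS := hinv n
      have ha : γ*(w (n+1))*(e (n+1)) ≤ γ * |w (n+1)| * E1 := by
        calc γ*(w (n+1))*(e (n+1)) ≤ |γ*(w (n+1))*(e (n+1))| := le_abs_self _
          _ = γ * |w (n+1)| * |e (n+1)| := by
              rw [abs_mul, abs_mul, abs_of_pos hγ0]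
          _ ≤ γ * |w (n+1)| * E1 :=
              mul_le_mul_of_nonneg_left (hek (n+1) (by omega))
                (mul_nonneg hγ0.le (abs_nonneg _))
      have hlow : -bud ≤ γ*(w (n+1))*(d (n+1+1)) := by
        rw [hrec (n+1)]; nlinarith [hS, ha]
      rw [hwrec (n+1)]
      nlinarith [hlow, f5]
  -- summation
  induction N with
  | zero => simp
  | succ n ih =>
    rw [Finset.sum_range_succ]
    have h := hstep n
    push_cast
    push_cast at ih
    nlinarith [ih, h]

private lemma amgmAux (c E x : ℝ) (hc : 0 < c) (hE : 0 ≤ E) :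
    E * |x| ≤ E^2/(2*c) + c/2 * x^2 := by
  have hc2 : (0:ℝ) < 2*c := by linarith
  have hid : 2*c*(E^2/(2*c)) = E^2 := by field_simp
  have key3 : 2*c*(E * |x|) ≤ 2*c*(E^2/(2*c) + c/2 * x^2) := by
    have hsq2 : c^2*|x|^2 = c^2*x^2 := by rw [sq_abs]
    nlinarith [sq_nonneg (E - c * |x|), hsq2, hid]
  exact (mul_le_mul_iff_right₀ hc2).mp key3

set_option maxHeartbeats 1600000 in
/-- Aggregated guarantee of inexact accelerated gradient descent on a
one-dimensional quadratic anchored at `s⁰` in the negative-curvature regime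
`λ < -θ/η`, with uniform error bounds `E₀` on the initial error and `E₁` on all
subsequent errors.  The convention `s⁻¹ = s⁰` is encoded through truncated
subtraction: `s (k - 1) = s 0` when `k = 0`. -/
theorem agd_aggregate_negative (l η θ B E₀ E₁ lam a : ℝ)
    (hl : 0 < l) (hη : η = 1 / (4 * l)) (hθ0 : 0 < θ) (hθ1 : θ ≤ 1) (hB : 0 < B)
    (hE₀ : 0 ≤ E₀) (hE₁ : 0 ≤ E₁)
    (hlam1 : -l ≤ lam) (hlam2 : lam < -(θ / η))
    (s y ε : ℕ → ℝ)
    (h h' : ℝ → ℝ)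
    (hdef : ∀ z, h z = a * (z - s 0) + (lam / 2) * (z - s 0) ^ 2)
    (h'def : ∀ z, h' z = a + lam * (z - s 0))
    (hε0 : |ε 0| ≤ E₀) (hεk : ∀ k, 1 ≤ k → |ε k| ≤ E₁)
    (hy : ∀ k, y k = s k + (1 - θ) * (s k - s (k - 1)))
    (hsucc : ∀ k, s (k + 1) = y k - η * h' (y k) - η * ε k)
    (N : ℕ) (hN : 1 ≤ N) :
    h (s N) ≤ -(θ / (2 * η)) * ∑ k ∈ Finset.range N, (s (k + 1) - s k) ^ 2
      + N * (η * E₀ ^ 2 + E₀ ^ 2 / (2 * B ^ ((3 : ℝ) / 2))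
          + (B ^ ((3 : ℝ) / 2) / 2) * (s 1 - y 0) ^ 2)
      + η * N * E₁ ^ 2 / (2 * θ) := by
  have hη0 : 0 < η := by rw [hη]; positivity
  have hηne : η ≠ 0 := ne_of_gt hη0
  have hlam0 : lam < 0 := by
    have : 0 < θ/η := div_pos hθ0 hη0
    linarith
  have hlamne : lam ≠ 0 := ne_of_lt hlam0
  obtain ⟨γ, hγdef⟩ : ∃ g : ℝ, g = -(η*lam) := ⟨_, rfl⟩
  have hθγ : θ < γ := by
    have h1 : η * lam < η * (-(θ/η)) := (mul_lt_mul_iff_right₀ hη0).mpr hlam2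
    have h2 : η * (-(θ/η)) = -θ := by field_simp
    rw [hγdef]; rw [h2] at h1; linarith
  have hγ4 : γ ≤ 1/4 := by
    have h1 : η * (-l) ≤ η * lam := (mul_le_mul_iff_right₀ hη0).mpr hlam1
    have h2 : η * l = 1/4 := by rw [hη]; field_simp
    rw [hγdef]; nlinarith
  have hγ0 : 0 < γ := lt_trans hθ0 hθγ
  -- the difference sequence
  set dfun : ℕ → ℝ := fun k => if k = 0 then 0 else s k - s (k-1) with hdfun
  have hd0 : dfun 0 = 0 := by simp [hdfun]
  have hdsucc : ∀ k : ℕ, dfun (k+1) = s (k+1) - s k := by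
    intro k; rw [hdfun]; simp
  have hy0 : y 0 = s 0 := by
    have := hy 0; simpa using this
  have hwrec : ∀ k : ℕ, (s (k+1) - s 0 + a/lam) = (s k - s 0 + a/lam) + dfun (k+1) := by
    intro k; rw [hdsucc]; ring
  have hrec : ∀ k : ℕ, dfun (k+1) =
      γ * (s k - s 0 + a/lam) + ((1+γ)*(1-θ)) * dfun k - η * ε k := by
    intro k
    cases k with
    | zero =>
      rw [hdsucc, hd0, hsucc 0, hy0, h'def]
      rw [hγdef]; field_simp; ring
    | succ n =>
      rw [hdsucc, hsucc (n+1), hy (n+1), h'def]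
      have hn1 : n + 1 - 1 = n := rfl
      rw [hn1, hdsucc, hγdef]
      field_simp; ring
  have key := coreSum θ γ (η*E₀) (η*E₁) (fun k => η * ε k)
      (fun k => s k - s 0 + a/lam) dfun hθ0 hθγ hγ4
      (by positivity) (by positivity)
      (by simpa [abs_mul, abs_of_pos hη0] using
        mul_le_mul_of_nonneg_left hε0 hη0.le)
      (fun k hk => by simpa [abs_mul, abs_of_pos hη0] using
        mul_le_mul_of_nonneg_left (hεk k hk) hη0.le)
      hd0 hrec hwrec N
  simp only [hdsucc, Nat.reduceAdd] at key
  have hN0 : (0:ℝ) ≤ (N:ℝ) := Nat.cast_nonneg N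
  have hh : h (s N) = lam/2*((s N - s 0 + a/lam)^2 - (s 0 - s 0 + a/lam)^2) := by
    rw [hdef]; field_simp; ring
  have hhh : η * h (s N)
      = -(γ/2*((s N - s 0 + a/lam)^2 - (s 0 - s 0 + a/lam)^2)) := by
    rw [hh, hγdef]; ring
  have hy0' : s 1 - s 0 = s 1 - y 0 := by rw [hy0]
  rw [hy0'] at key
  -- AM-GM on the E₀ |d1| term
  have hB32 : (0:ℝ) < B ^ ((3:ℝ)/2) := Real.rpow_pos_of_pos hB _
  have hamgm : E₀ * |s 1 - y 0| ≤ E₀^2/(2*B ^ ((3:ℝ)/2))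
      + (B ^ ((3:ℝ)/2)/2) * (s 1 - y 0)^2 :=
    amgmAux _ _ _ hB32 hE₀
  have hamgmN := mul_le_mul_of_nonneg_left hamgm (mul_nonneg hN0 hη0.le)
  -- scale the goal by η
  refine (mul_le_mul_iff_right₀ hη0).mp ?_
  have eR : η * (-(θ / (2 * η)) * ∑ k ∈ Finset.range N, (s (k + 1) - s k) ^ 2
      + N * (η * E₀ ^ 2 + E₀ ^ 2 / (2 * B ^ ((3 : ℝ) / 2))
          + (B ^ ((3 : ℝ) / 2) / 2) * (s 1 - y 0) ^ 2)
      + η * N * E₁ ^ 2 / (2 * θ))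
      = -(θ/2) * ∑ k ∈ Finset.range N, (s (k + 1) - s k) ^ 2
        + (N:ℝ) * (η*E₀^2*η + η*(E₀ ^ 2 / (2 * B ^ ((3 : ℝ) / 2))
            + (B ^ ((3 : ℝ) / 2) / 2) * (s 1 - y 0) ^ 2))
        + η^2 * N * E₁^2/(2*θ) := by
    field_simp
    ring
  rw [eR, hhh]
  have h1 : (N:ℝ) * ((η * E₀) ^ 2 + η * E₀ * |s 1 - y 0| + (η * E₁) ^ 2 / (2 * θ))
      = (N:ℝ) * (η*E₀)^2 + (N:ℝ) * η * (E₀ * |s 1 - y 0|)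
        + η ^ 2 * (N:ℝ) * E₁ ^ 2 / (2 * θ) := by ring
  rw [h1] at key
  have h2 : (N:ℝ) * (η * E₀ ^ 2 * η + η * (E₀ ^ 2 / (2 * B ^ ((3:ℝ)/2))
        + B ^ ((3:ℝ)/2) / 2 * (s 1 - y 0) ^ 2))
      = (N:ℝ) * (η*E₀)^2 + (N:ℝ) * η * (E₀ ^ 2 / (2 * B ^ ((3:ℝ)/2))
        + B ^ ((3:ℝ)/2) / 2 * (s 1 - y 0) ^ 2) := by ring
  rw [h2]
  linarith only [key, hamgmN]
end

section
/- Let E be a real inner product space, l > 0, B > 0, r > 0. Let f : E → ℝ be differentiable, and suppose ‖∇f(u) − ∇f(v)‖ ≤ l‖u − v‖ for all u, v on the segment joining 0 and ξ (in particular for u = ξ, v = 0). Suppose g₀ ∈ E satisfies ‖g₀‖ ≤ lB and ‖g₀ − ∇f(0)‖ ≤ lB/2, and suppose ‖ξ‖ ≤ r. Then f(0) − f(ξ) ≤ 3lr²/2 + 3lrB/2. -/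
/-- Bound on the possible increase in function value caused by the random
perturbation `ξ` (drawn from the ball of radius `r`) used as the starting point of
the perturbed tangent space step. -/
theorem perturbation_increase_bound {E : Type*} [NormedAddCommGroup E]
    [InnerProductSpace ℝ E] [CompleteSpace E]
    (l B r : ℝ) (hl : 0 < l) (hB : 0 < B) (hr : 0 < r)
    (f : E → ℝ) (hf : Differentiable ℝ f) (ξ : E)
    (hlip : ∀ u ∈ segment ℝ (0 : E) ξ, ∀ v ∈ segment ℝ (0 : E) ξ,
        ‖gradient f u - gradient f v‖ ≤ l * ‖u - v‖)
    (g0 : E) (hg0 : ‖g0‖ ≤ l * B) (hg0e : ‖g0 - gradient f 0‖ ≤ l * B / 2)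
    (hξ : ‖ξ‖ ≤ r) :
    f 0 - f ξ ≤ 3 * l * r ^ 2 / 2 + 3 * l * r * B / 2 := by
  set s := segment ℝ (0 : E) ξ with hs
  have h0s : (0 : E) ∈ s := left_mem_segment ℝ 0 ξ
  have hξs : ξ ∈ s := right_mem_segment ℝ 0 ξ
  have hconv : Convex ℝ s := convex_segment 0 ξ
  have hfd : ∀ x ∈ s, HasFDerivWithinAt f (fderiv ℝ f x) s x := fun x _ =>
    (hf x).hasFDerivAt.hasFDerivWithinAt
  have hnormgrad : ∀ u v : E, ‖fderiv ℝ f u - fderiv ℝ f v‖ = ‖gradient f u - gradient f v‖ := by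
    intro u v
    have h1 : fderiv ℝ f u = (InnerProductSpace.toDual ℝ E) (gradient f u) := by
      rw [gradient]; simp
    have h2 : fderiv ℝ f v = (InnerProductSpace.toDual ℝ E) (gradient f v) := by
      rw [gradient]; simp
    rw [h1, h2, ← map_sub]
    exact (InnerProductSpace.toDual ℝ E).norm_map _
  have bound : ∀ x ∈ s, ‖fderiv ℝ f x - fderiv ℝ f 0‖ ≤ l * r := by
    intro x hx
    rw [hnormgrad]
    have := hlip x hx 0 h0s
    have hxn : ‖x - 0‖ ≤ r := by
      rw [sub_zero]
      rcases hx with ⟨a, b, ha, hb, hab, rfl⟩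
      simp only [smul_zero, zero_add]
      calc ‖b • ξ‖ = |b| * ‖ξ‖ := by rw [norm_smul, Real.norm_eq_abs]
        _ ≤ 1 * r := by
            apply mul_le_mul _ hξ (norm_nonneg _) zero_le_one
            rw [abs_of_nonneg hb]; linarith
        _ = r := one_mul r
    calc ‖gradient f x - gradient f 0‖ ≤ l * ‖x - 0‖ := this
      _ ≤ l * r := by nlinarith
  have key := Convex.norm_image_sub_le_of_norm_hasFDerivWithin_le' hfd bound hconv h0s hξs
  rw [sub_zero] at key
  have hval : |fderiv ℝ f 0 ξ| ≤ ‖gradient f 0‖ * ‖ξ‖ := by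
    have h1 : fderiv ℝ f 0 ξ = inner ℝ (gradient f 0) ξ := by
      rw [gradient]; simp
    rw [h1]
    exact abs_real_inner_le_norm _ _
  have hgrad0 : ‖gradient f 0‖ ≤ 3 * l * B / 2 := by
    calc ‖gradient f 0‖ = ‖g0 - (g0 - gradient f 0)‖ := by rw [sub_sub_cancel]
      _ ≤ ‖g0‖ + ‖g0 - gradient f 0‖ := norm_sub_le _ _
      _ ≤ l * B + l * B / 2 := add_le_add hg0 hg0e
      _ = 3 * l * B / 2 := by ring
  have h2 : |f ξ - f 0 - fderiv ℝ f 0 ξ| ≤ l * r * ‖ξ‖ := by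
    simpa [Real.norm_eq_abs] using key
  have h3 := abs_le.1 h2
  have h4 := abs_le.1 hval
  have hξ0 : 0 ≤ ‖ξ‖ := norm_nonneg _
  nlinarith [mul_le_mul_of_nonneg_left hξ (le_of_lt (mul_pos hl hr)),
    mul_le_mul hgrad0 hξ hξ0 (by positivity : (0:ℝ) ≤ 3 * l * B / 2)]
end

section
/- Let E be a real inner product space, l > 0, ρ > 0, B > 0, θ ∈ (0,1], η = 1/(4l), E_μ ≥ 0, and K ≥ 1 a natural number. Let f : E → ℝ be twice continuously differentiable with Hessian ρ-Lipschitz on the closed ball of radius 2B centered at s^0. Set s^{−1} = s^0 and define iterates y^k = s^k + (1 − θ)(s^k − s^{k−1}) and s^{k+1} = y^k − η g^k, where each g^k ∈ E satisfies ‖g^k − ∇f(y^k)‖ ≤ E_μ. Suppose that for every k with 1 ≤ k ≤ K one has k · ∑_{j=0}^{k−1} ‖s^{j+1} − s^j‖² ≤ B². Let K₀ be an index with ⌊K/2⌋ ≤ K₀ ≤ K−1 that minimizes ‖s^{k+1} − s^k‖ over all k with ⌊K/2⌋ ≤ k ≤ K−1, and let y* = (1/(K₀+1)) · ∑_{k=0}^{K₀}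 y^k. Then ‖∇f(y*)‖ ≤ 2ρB² + 2√2·B/(K²η) + 2θB/(Kη) + √(2E_μ² + 8ρ²B⁴). -/
open Metric

/-- Variance identity / bias-variance: the mean minimizes the sum of squared
distances. -/
lemma variance_mean_le {E : Type*} [NormedAddCommGroup E] [InnerProductSpace ℝ E]
    (n : ℕ) (a : ℕ → E) (c m : E)
    (hm : m = ((n : ℝ))⁻¹ • ∑ k ∈ Finset.range n, a k) (hn : 0 < n) :
    ∑ k ∈ Finset.range n, ‖a k - m‖ ^ 2 ≤ ∑ k ∈ Finset.range n, ‖a k - c‖ ^ 2 := by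
  have hN : ((n : ℝ)) ≠ 0 := by positivity
  have hsum0 : ∑ k ∈ Finset.range n, (a k - m) = 0 := by
    rw [Finset.sum_sub_distrib, Finset.sum_const, Finset.card_range, sub_eq_zero, hm,
      ← Nat.cast_smul_eq_nsmul ℝ, smul_smul, mul_inv_cancel₀ hN, one_smul]
  have hexp : ∀ k, ‖a k - c‖ ^ 2
      = ‖a k - m‖ ^ 2 + 2 * (inner ℝ (a k - m) (m - c) : ℝ) + ‖m - c‖ ^ 2 := by
    intro k
    have h : a k - c = (a k - m) + (m - c) := by abel
    rw [h, norm_add_sq_real]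
  calc ∑ k ∈ Finset.range n, ‖a k - m‖ ^ 2
      ≤ ∑ k ∈ Finset.range n, ‖a k - m‖ ^ 2 + (n : ℝ) * ‖m - c‖ ^ 2 :=
        le_add_of_nonneg_right (by positivity)
    _ = ∑ k ∈ Finset.range n, ‖a k - c‖ ^ 2 := by
        rw [Finset.sum_congr rfl fun k _ => hexp k]
        rw [Finset.sum_add_distrib, Finset.sum_add_distrib, Finset.sum_const,
          Finset.card_range]
        have : ∑ k ∈ Finset.range n, 2 * (inner ℝ (a k - m) (m - c) : ℝ)
            = 2 * (inner ℝ (∑ k ∈ Finset.range n, (a k - m)) (m - c) : ℝ) := by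
          rw [sum_inner, Finset.mul_sum]
        rw [this, hsum0, inner_zero_left, mul_zero, add_zero, nsmul_eq_mul]

set_option maxHeartbeats 1600000 in
/-- Guarantee of the tangent space step when the termination criterion never
triggers within `K` iterations: the averaged extrapolated iterate `y*` has small
gradient.  The convention `s⁻¹ = s⁰` is encoded through truncated subtraction:
`s (k - 1) = s 0` when `k = 0`. -/
theorem tss_no_trigger_small_gradient {E : Type*} [NormedAddCommGroup E]
    [InnerProductSpace ℝ E] [CompleteSpace E]
    (l ρ B θ η Eμ : ℝ) (hl : 0 < l) (hρ : 0 < ρ) (hB : 0 < B)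
    (hθ0 : 0 < θ) (hθ1 : θ ≤ 1) (hη : η = 1 / (4 * l)) (hEμ : 0 ≤ Eμ)
    (K : ℕ) (hK : 1 ≤ K)
    (f : E → ℝ) (hf : ContDiff ℝ 2 f)
    (s y g : ℕ → E)
    (hhesslip : ∀ u ∈ closedBall (s 0) (2 * B), ∀ v ∈ closedBall (s 0) (2 * B),
        ‖fderiv ℝ (gradient f) u - fderiv ℝ (gradient f) v‖ ≤ ρ * ‖u - v‖)
    (hy : ∀ k, y k = s k + (1 - θ) • (s k - s (k - 1)))
    (hsucc : ∀ k, s (k + 1) = y k - η • g k)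
    (hg : ∀ k, ‖g k - gradient f (y k)‖ ≤ Eμ)
    (hnotrig : ∀ k, 1 ≤ k → k ≤ K →
        (k : ℝ) * ∑ j ∈ Finset.range k, ‖s (j + 1) - s j‖ ^ 2 ≤ B ^ 2)
    (K₀ : ℕ) (hK₀lo : K / 2 ≤ K₀) (hK₀hi : K₀ ≤ K - 1)
    (hmin : ∀ k, K / 2 ≤ k → k ≤ K - 1 →
        ‖s (K₀ + 1) - s K₀‖ ≤ ‖s (k + 1) - s k‖)
    (ystar : E) (hystar : ystar = ((K₀ : ℝ) + 1)⁻¹ • ∑ k ∈ Finset.range (K₀ + 1), y k) :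
    ‖gradient f ystar‖ ≤ 2 * ρ * B ^ 2 + 2 * Real.sqrt 2 * B / (K ^ 2 * η)
      + 2 * θ * B / (K * η) + Real.sqrt (2 * Eμ ^ 2 + 8 * ρ ^ 2 * B ^ 4) := by
  have hη0 : 0 < η := by rw [hη]; positivity
  have hK0 : (0 : ℝ) < K := by exact_mod_cast hK
  have hK₀K : K₀ < K := by omega
  set G := gradient f with hG
  set n := K₀ + 1 with hn
  set N : ℝ := (K₀ : ℝ) + 1 with hNdef
  have hN0 : (0 : ℝ) < N := by positivity
  have hNn : (n : ℝ) = N := by push_cast [hn, hNdef]; ring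
  -- Step 0: differentiability of the gradient
  have hGdiff : Differentiable ℝ G := by
    have h1 : ContDiff ℝ 1 (fderiv ℝ f) := hf.fderiv_right (by norm_num)
    have h2 : ContDiff ℝ 1 G := by
      have : G = fun x => (InnerProductSpace.toDual ℝ E).symm (fderiv ℝ f x) := rfl
      rw [this]
      exact (InnerProductSpace.toDual ℝ E).symm.contDiff.comp h1
    exact h2.differentiable one_ne_zero
  -- Step 1: displacement bounds
  have hs0 : ∀ k, k ≤ K → ‖s k - s 0‖ ≤ B := by
    intro k hk
    rcases Nat.eq_zero_or_pos k with h0 | h1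
    · subst h0; simp [hB.le]
    · have hT : s k - s 0 = ∑ j ∈ Finset.range k, (s (j + 1) - s j) :=
        (Finset.sum_range_sub (fun i => s i) k).symm
      rw [hT]
      have h2 : ‖∑ j ∈ Finset.range k, (s (j + 1) - s j)‖
          ≤ ∑ j ∈ Finset.range k, ‖s (j + 1) - s j‖ := norm_sum_le _ _
      have h3 : (∑ j ∈ Finset.range k, ‖s (j + 1) - s j‖) ^ 2
          ≤ (k : ℝ) * ∑ j ∈ Finset.range k, ‖s (j + 1) - s j‖ ^ 2 := by
        have := sq_sum_le_card_mul_sum_sq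
          (s := Finset.range k) (f := fun j => ‖s (j + 1) - s j‖)
        simpa [Finset.card_range] using this
      have h4 := hnotrig k h1 hk
      have h5 : (0 : ℝ) ≤ ∑ j ∈ Finset.range k, ‖s (j + 1) - s j‖ :=
        Finset.sum_nonneg fun j _ => norm_nonneg _
      nlinarith [h3.trans h4]
  have hsumsq : ∑ j ∈ Finset.range K, ‖s (j + 1) - s j‖ ^ 2 ≤ B ^ 2 / K := by
    have := hnotrig K hK le_rfl
    rw [le_div_iff₀ hK0]
    linarith [this]
  have hd : ∀ k, k < K → ‖s (k + 1) - s k‖ ≤ B := by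
    intro k hk
    have h1 : ‖s (k + 1) - s k‖ ^ 2 ≤ ∑ j ∈ Finset.range (k + 1), ‖s (j + 1) - s j‖ ^ 2 :=
      Finset.single_le_sum (f := fun j => ‖s (j + 1) - s j‖ ^ 2)
        (fun j _ => by positivity) (Finset.self_mem_range_succ k)
    have h2 := hnotrig (k + 1) (by omega) (by omega)
    have h3 : (1 : ℝ) ≤ ((k + 1 : ℕ) : ℝ) := by exact_mod_cast Nat.one_le_iff_ne_zero.mpr (by omega)
    have h4 : (0 : ℝ) ≤ ∑ j ∈ Finset.range (k + 1), ‖s (j + 1) - s j‖ ^ 2 :=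
      Finset.sum_nonneg fun j _ => by positivity
    nlinarith [norm_nonneg (s (k + 1) - s k)]
  -- Step 2: y k stays in the ball of radius 2B
  have hyb : ∀ k, k < K → y k ∈ closedBall (s 0) (2 * B) := by
    intro k hk
    rw [mem_closedBall, dist_eq_norm]
    rcases Nat.eq_zero_or_pos k with h0 | h1
    · subst h0
      rw [hy 0]
      simp [hB.le]
    · obtain ⟨j, rfl⟩ : ∃ j, k = j + 1 := ⟨k - 1, by omega⟩
      rw [hy (j + 1)]
      have e1 : s (j + 1) + (1 - θ) • (s (j + 1) - s (j + 1 - 1)) - s 0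
          = (s (j + 1) - s 0) + (1 - θ) • (s (j + 1) - s j) := by
        simp only [Nat.add_sub_cancel]
        abel
      rw [e1]
      calc ‖(s (j + 1) - s 0) + (1 - θ) • (s (j + 1) - s j)‖
          ≤ ‖s (j + 1) - s 0‖ + ‖(1 - θ) • (s (j + 1) - s j)‖ := norm_add_le _ _
        _ ≤ B + 1 * B := by
            have hL : ‖s (j + 1) - s 0‖ ≤ B := hs0 (j + 1) (by omega)
            have habs : |1 - θ| ≤ 1 := by rw [abs_le]; constructor <;> linarith
            have hR : ‖(1 - θ) • (s (j + 1) - s j)‖ ≤ 1 * B := by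
              rw [norm_smul, Real.norm_eq_abs]
              exact mul_le_mul habs (hd j (by omega)) (norm_nonneg _) zero_le_one
            linarith
        _ = 2 * B := by ring
  -- Step 3: ystar in the ball
  have hyb' : ∀ k ∈ Finset.range n, y k ∈ closedBall (s 0) (2 * B) := by
    intro k hk
    rw [Finset.mem_range] at hk
    exact hyb k (by omega)
  have hystar_ball : ystar ∈ closedBall (s 0) (2 * B) := by
    rw [mem_closedBall, dist_eq_norm, hystar]
    have e1 : ((K₀ : ℝ) + 1)⁻¹ • ∑ k ∈ Finset.range n, y k - s 0
        = N⁻¹ • ∑ k ∈ Finset.range n, (y k - s 0) := by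
      rw [Finset.sum_sub_distrib, smul_sub, Finset.sum_const, Finset.card_range,
        ← Nat.cast_smul_eq_nsmul ℝ, smul_smul, hNn, inv_mul_cancel₀ hN0.ne', one_smul]
    rw [e1, norm_smul]
    have h2 : ‖∑ k ∈ Finset.range n, (y k - s 0)‖ ≤ (n : ℝ) * (2 * B) := by
      calc ‖∑ k ∈ Finset.range n, (y k - s 0)‖ ≤ ∑ k ∈ Finset.range n, ‖y k - s 0‖ :=
            norm_sum_le _ _
        _ ≤ ∑ k ∈ Finset.range n, (2 * B) := by
            apply Finset.sum_le_sum
            intro k hk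
            have := hyb' k hk
            rwa [mem_closedBall, dist_eq_norm] at this
        _ = (n : ℝ) * (2 * B) := by rw [Finset.sum_const, Finset.card_range, nsmul_eq_mul]
    calc ‖N⁻¹‖ * ‖∑ k ∈ Finset.range n, (y k - s 0)‖
        ≤ N⁻¹ * ((n : ℝ) * (2 * B)) := by
          rw [Real.norm_eq_abs, abs_of_pos (inv_pos.mpr hN0)]
          gcongr
      _ = (2 * B) * (N⁻¹ * N) := by rw [hNn]; ring
      _ = 2 * B := by rw [inv_mul_cancel₀ hN0.ne', mul_one]
  -- Step 4: Taylor expansion of the gradient around ystar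
  set T := fderiv ℝ G ystar with hT
  have htaylor : ∀ a ∈ closedBall (s 0) (2 * B),
      ‖G a - G ystar - T (a - ystar)‖ ≤ ρ * ‖a - ystar‖ ^ 2 := by
    intro a ha
    have hseg : segment ℝ ystar a ⊆ closedBall (s 0) (2 * B) :=
      (convex_closedBall _ _).segment_subset hystar_ball ha
    have hbound : ∀ u ∈ segment ℝ ystar a, ‖fderiv ℝ G u - T‖ ≤ ρ * ‖a - ystar‖ := by
      intro u hu
      have hu' : u ∈ closedBall (s 0) (2 * B) := hseg hu
      have h1 := hhesslip u hu' ystar hystar_ball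
      have h2 : ‖u - ystar‖ ≤ ‖a - ystar‖ := by
        rw [segment_eq_image'] at hu
        obtain ⟨t, ht, rfl⟩ := hu
        simp only [add_sub_cancel_left, norm_smul, Real.norm_eq_abs,
          abs_of_nonneg ht.1]
        nlinarith [norm_nonneg (a - ystar), ht.2]
      calc ‖fderiv ℝ G u - T‖ ≤ ρ * ‖u - ystar‖ := h1
        _ ≤ ρ * ‖a - ystar‖ := by gcongr
    have := Convex.norm_image_sub_le_of_norm_fderiv_le'
      (f := G) (φ := T) (C := ρ * ‖a - ystar‖)
      (fun u _ => hGdiff u) hbound (convex_segment _ _)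
      (left_mem_segment ℝ ystar a) (right_mem_segment ℝ ystar a)
    calc ‖G a - G ystar - T (a - ystar)‖ ≤ ρ * ‖a - ystar‖ * ‖a - ystar‖ := this
      _ = ρ * ‖a - ystar‖ ^ 2 := by ring
  -- Step 5: averaging identity for the gradient
  have hsumy0 : ∑ k ∈ Finset.range n, (y k - ystar) = 0 := by
    rw [Finset.sum_sub_distrib, Finset.sum_const, Finset.card_range, sub_eq_zero, hystar,
      ← Nat.cast_smul_eq_nsmul ℝ, smul_smul, hNn, mul_inv_cancel₀ hN0.ne', one_smul]
  have hkey : G ystar = N⁻¹ • ∑ k ∈ Finset.range n, G (y k)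
      - N⁻¹ • ∑ k ∈ Finset.range n, (G (y k) - G ystar - T (y k - ystar)) := by
    have h1 : ∑ k ∈ Finset.range n, (G (y k) - G ystar - T (y k - ystar))
        = ∑ k ∈ Finset.range n, G (y k) - (n : ℕ) • G ystar
          - T (∑ k ∈ Finset.range n, (y k - ystar)) := by
      rw [Finset.sum_sub_distrib, Finset.sum_sub_distrib, Finset.sum_const,
        Finset.card_range, map_sum]
    rw [h1, hsumy0, map_zero, sub_zero, smul_sub, ← Nat.cast_smul_eq_nsmul ℝ, smul_smul, hNn,
      inv_mul_cancel₀ hN0.ne', one_smul]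
    abel
  -- Step 6: bound on the average Taylor error
  have herr : ‖N⁻¹ • ∑ k ∈ Finset.range n, (G (y k) - G ystar - T (y k - ystar))‖
      ≤ 4 * ρ * B ^ 2 := by
    rw [norm_smul, Real.norm_eq_abs, abs_of_pos (inv_pos.mpr hN0)]
    have h1 : ‖∑ k ∈ Finset.range n, (G (y k) - G ystar - T (y k - ystar))‖
        ≤ ∑ k ∈ Finset.range n, (ρ * ‖y k - ystar‖ ^ 2) :=
      (norm_sum_le _ _).trans (Finset.sum_le_sum fun k hk => htaylor (y k) (hyb' k hk))
    have h2 : ∑ k ∈ Finset.range n, ‖y k - ystar‖ ^ 2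
        ≤ ∑ k ∈ Finset.range n, ‖y k - s 0‖ ^ 2 := by
      apply variance_mean_le n y (s 0) ystar _ (by omega)
      rw [hystar, hNn]
    have h3 : ∑ k ∈ Finset.range n, ‖y k - s 0‖ ^ 2 ≤ (n : ℝ) * (2 * B) ^ 2 := by
      calc ∑ k ∈ Finset.range n, ‖y k - s 0‖ ^ 2 ≤ ∑ k ∈ Finset.range n, (2 * B) ^ 2 := by
            apply Finset.sum_le_sum
            intro k hk
            have := hyb' k hk
            rw [mem_closedBall, dist_eq_norm] at this
            exact pow_le_pow_left₀ (norm_nonneg _) this 2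
        _ = (n : ℝ) * (2 * B) ^ 2 := by rw [Finset.sum_const, Finset.card_range, nsmul_eq_mul]
    have h4 : ∑ k ∈ Finset.range n, (ρ * ‖y k - ystar‖ ^ 2) ≤ ρ * ((n : ℝ) * (2 * B) ^ 2) := by
      rw [← Finset.mul_sum]
      exact mul_le_mul_of_nonneg_left (h2.trans h3) hρ.le
    calc N⁻¹ * ‖∑ k ∈ Finset.range n, (G (y k) - G ystar - T (y k - ystar))‖
        ≤ N⁻¹ * (ρ * ((n : ℝ) * (2 * B) ^ 2)) := by
          exact mul_le_mul_of_nonneg_left (h1.trans h4) (inv_nonneg.mpr hN0.le)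
      _ = ρ * (2 * B) ^ 2 * (N⁻¹ * N) := by rw [hNn]; ring
      _ = 4 * ρ * B ^ 2 := by rw [inv_mul_cancel₀ hN0.ne']; ring
  -- Step 7: average gradient vs average g
  have havgg : ‖N⁻¹ • ∑ k ∈ Finset.range n, G (y k)
      - N⁻¹ • ∑ k ∈ Finset.range n, g k‖ ≤ Eμ := by
    have h1 : N⁻¹ • ∑ k ∈ Finset.range n, G (y k) - N⁻¹ • ∑ k ∈ Finset.range n, g k
        = N⁻¹ • ∑ k ∈ Finset.range n, (G (y k) - g k) := by
      rw [Finset.sum_sub_distrib, smul_sub]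
    rw [h1, norm_smul, Real.norm_eq_abs, abs_of_pos (inv_pos.mpr hN0)]
    have h2 : ‖∑ k ∈ Finset.range n, (G (y k) - g k)‖ ≤ (n : ℝ) * Eμ := by
      calc ‖∑ k ∈ Finset.range n, (G (y k) - g k)‖
          ≤ ∑ k ∈ Finset.range n, ‖G (y k) - g k‖ := norm_sum_le _ _
        _ ≤ ∑ k ∈ Finset.range n, Eμ := by
            apply Finset.sum_le_sum
            intro k _
            rw [norm_sub_rev]
            exact hg k
        _ = (n : ℝ) * Eμ := by rw [Finset.sum_const, Finset.card_range, nsmul_eq_mul]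
    calc N⁻¹ * ‖∑ k ∈ Finset.range n, (G (y k) - g k)‖ ≤ N⁻¹ * ((n : ℝ) * Eμ) := by
          exact mul_le_mul_of_nonneg_left h2 (inv_nonneg.mpr hN0.le)
      _ = Eμ * (N⁻¹ * N) := by rw [hNn]; ring
      _ = Eμ := by rw [inv_mul_cancel₀ hN0.ne', mul_one]
  -- Step 8: telescoping identity for the g-sum
  have hterm : ∀ k, y k - s (k + 1) = η • g k := by
    intro k
    rw [hsucc k]; abel
  have hsumg : η • ∑ k ∈ Finset.range n, g k
      = -(s (K₀ + 1) - s K₀) - θ • (s K₀ - s 0) := by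
    have hVeq : η • ∑ k ∈ Finset.range n, g k = ∑ k ∈ Finset.range n, (y k - s (k + 1)) := by
      rw [Finset.smul_sum]
      exact Finset.sum_congr rfl fun k _ => (hterm k).symm
    rw [hVeq]
    have hsplit : ∀ k, y k - s (k + 1)
        = (s k - s (k + 1)) + (1 - θ) • (s k - s (k - 1)) := by
      intro k; rw [hy k]; abel
    rw [Finset.sum_congr rfl fun k _ => hsplit k, Finset.sum_add_distrib,
      ← Finset.smul_sum]
    have hT1 : ∑ k ∈ Finset.range n, (s k - s (k + 1)) = s 0 - s n :=
      Finset.sum_range_sub' (fun i => s i) n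
    have hT2 : ∑ k ∈ Finset.range n, (s k - s (k - 1)) = s K₀ - s 0 := by
      rw [hn, Finset.sum_range_succ']
      simp only [Nat.add_sub_cancel, Nat.zero_sub, sub_self, add_zero]
      exact Finset.sum_range_sub (fun i => s i) K₀
    rw [hT1, hT2, hn, sub_smul, one_smul]
    abel
  -- Step 9: bound on the minimal step
  have hdK0 : ‖s (K₀ + 1) - s K₀‖ ≤ Real.sqrt 2 * B / K := by
    set m := K - K / 2 with hm
    have hmpos : 0 < m := by omega
    have hcard : (Finset.Ico (K / 2) K).card = m := by
      rw [Nat.card_Ico]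
    have h1 : (m : ℝ) * ‖s (K₀ + 1) - s K₀‖ ^ 2
        ≤ ∑ k ∈ Finset.Ico (K / 2) K, ‖s (k + 1) - s k‖ ^ 2 := by
      have := Finset.card_nsmul_le_sum (Finset.Ico (K / 2) K)
        (fun k => ‖s (k + 1) - s k‖ ^ 2) (‖s (K₀ + 1) - s K₀‖ ^ 2) ?_
      · rw [hcard, nsmul_eq_mul] at this
        exact_mod_cast this
      · intro k hk
        rw [Finset.mem_Ico] at hk
        exact pow_le_pow_left₀ (norm_nonneg _) (hmin k hk.1 (by omega)) 2
    have h2 : ∑ k ∈ Finset.Ico (K / 2) K, ‖s (k + 1) - s k‖ ^ 2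
        ≤ ∑ k ∈ Finset.range K, ‖s (k + 1) - s k‖ ^ 2 := by
      apply Finset.sum_le_sum_of_subset_of_nonneg
      · intro k hk
        rw [Finset.mem_Ico] at hk
        rw [Finset.mem_range]
        exact hk.2
      · intro k _ _; positivity
    have hmK : (K : ℝ) / 2 ≤ (m : ℝ) := by
      have : (K / 2 : ℕ) ≤ K := Nat.div_le_self K 2
      have h3 : ((K / 2 : ℕ) : ℝ) ≤ (K : ℝ) / 2 := by
        rw [le_div_iff₀ (by norm_num : (0:ℝ) < 2)]
        exact_mod_cast Nat.div_mul_le_self K 2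
      have h4 : (m : ℝ) = (K : ℝ) - ((K / 2 : ℕ) : ℝ) := by
        rw [hm]; push_cast [Nat.cast_sub this]; ring
      linarith
    have hsq : ‖s (K₀ + 1) - s K₀‖ ^ 2 ≤ 2 * B ^ 2 / K ^ 2 := by
      have h5 : (m : ℝ) * ‖s (K₀ + 1) - s K₀‖ ^ 2 ≤ B ^ 2 / K := (h1.trans h2).trans hsumsq
      have hm0 : (0 : ℝ) < m := by exact_mod_cast hmpos
      have h6 : ((K : ℝ) / 2) * ‖s (K₀ + 1) - s K₀‖ ^ 2 ≤ B ^ 2 / K := by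
        nlinarith [sq_nonneg (‖s (K₀ + 1) - s K₀‖)]
      have h6' := mul_le_mul_of_nonneg_left h6 (by positivity : (0:ℝ) ≤ 2 * K)
      have e : 2 * (K : ℝ) * (B ^ 2 / K) = 2 * B ^ 2 := by field_simp
      rw [le_div_iff₀ (by positivity : (0:ℝ) < (K:ℝ) ^ 2)]
      nlinarith [h6']
    have h7 : (Real.sqrt 2 * B / K) ^ 2 = 2 * B ^ 2 / K ^ 2 := by
      rw [div_pow, mul_pow, Real.sq_sqrt (by norm_num : (0:ℝ) ≤ 2)]
    have hy0 : (0:ℝ) < Real.sqrt 2 * B / K := by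
      have : (0:ℝ) < Real.sqrt 2 := Real.sqrt_pos.mpr (by norm_num)
      positivity
    nlinarith [norm_nonneg (s (K₀ + 1) - s K₀), hsq, h7, hy0]
  -- Step 10: bound on the averaged g
  have hNK : (K : ℝ) / 2 ≤ N := by
    have h1 : K ≤ 2 * K₀ + 1 := by omega
    have : (K : ℝ) ≤ 2 * (K₀ : ℝ) + 1 := by exact_mod_cast h1
    rw [hNdef]; linarith
  have havgg2 : ‖N⁻¹ • ∑ k ∈ Finset.range n, g k‖
      ≤ 2 * Real.sqrt 2 * B / (K ^ 2 * η) + 2 * θ * B / (K * η) := by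
    have hV : ‖η • ∑ k ∈ Finset.range n, g k‖ ≤ Real.sqrt 2 * B / K + θ * B := by
      rw [hsumg]
      calc ‖-(s (K₀ + 1) - s K₀) - θ • (s K₀ - s 0)‖
          ≤ ‖s (K₀ + 1) - s K₀‖ + θ * ‖s K₀ - s 0‖ := by
            refine (norm_sub_le _ _).trans ?_
            rw [norm_neg, norm_smul, Real.norm_eq_abs, abs_of_pos hθ0]
        _ ≤ Real.sqrt 2 * B / K + θ * B := by
            gcongr
            exact hs0 K₀ (by omega)
    have hVnorm : ‖∑ k ∈ Finset.range n, g k‖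
        = η⁻¹ * ‖η • ∑ k ∈ Finset.range n, g k‖ := by
      rw [norm_smul, Real.norm_eq_abs, abs_of_pos hη0]
      field_simp
    rw [norm_smul, Real.norm_eq_abs, abs_of_pos (inv_pos.mpr hN0), hVnorm]
    have hstep : N⁻¹ * (η⁻¹ * ‖η • ∑ k ∈ Finset.range n, g k‖)
        ≤ (2 / K) * (η⁻¹ * (Real.sqrt 2 * B / K + θ * B)) := by
      have hNinv : N⁻¹ ≤ 2 / K := by
        calc N⁻¹ ≤ ((K : ℝ) / 2)⁻¹ := by
              apply inv_anti₀ (by positivity) hNK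
          _ = 2 / K := by rw [inv_div]
      have h1 : 0 ≤ η⁻¹ * ‖η • ∑ k ∈ Finset.range n, g k‖ := by positivity
      have h2 : η⁻¹ * ‖η • ∑ k ∈ Finset.range n, g k‖
          ≤ η⁻¹ * (Real.sqrt 2 * B / K + θ * B) := by gcongr
      calc N⁻¹ * (η⁻¹ * ‖η • ∑ k ∈ Finset.range n, g k‖)
          ≤ (2 / K) * (η⁻¹ * ‖η • ∑ k ∈ Finset.range n, g k‖) :=
            mul_le_mul_of_nonneg_right hNinv h1
        _ ≤ (2 / K) * (η⁻¹ * (Real.sqrt 2 * B / K + θ * B)) :=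
            mul_le_mul_of_nonneg_left h2 (by positivity)
    refine hstep.trans (le_of_eq ?_)
    field_simp
  -- Step 11: absorb the extra terms into the sqrt
  have habsorb : Eμ + 2 * ρ * B ^ 2 ≤ Real.sqrt (2 * Eμ ^ 2 + 8 * ρ ^ 2 * B ^ 4) := by
    have h1 : Eμ + 2 * ρ * B ^ 2 = Real.sqrt ((Eμ + 2 * ρ * B ^ 2) ^ 2) :=
      (Real.sqrt_sq (by positivity)).symm
    rw [h1]
    apply Real.sqrt_le_sqrt
    nlinarith [sq_nonneg (Eμ - 2 * ρ * B ^ 2)]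
  -- Final assembly
  have hfinal : ‖G ystar‖ ≤ (2 * Real.sqrt 2 * B / (K ^ 2 * η) + 2 * θ * B / (K * η))
      + Eμ + 4 * ρ * B ^ 2 := by
    rw [hkey]
    calc ‖N⁻¹ • ∑ k ∈ Finset.range n, G (y k)
          - N⁻¹ • ∑ k ∈ Finset.range n, (G (y k) - G ystar - T (y k - ystar))‖
        ≤ ‖N⁻¹ • ∑ k ∈ Finset.range n, G (y k)‖
          + ‖N⁻¹ • ∑ k ∈ Finset.range n, (G (y k) - G ystar - T (y k - ystar))‖ :=
          norm_sub_le _ _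
      _ ≤ (‖N⁻¹ • ∑ k ∈ Finset.range n, g k‖ + Eμ) + 4 * ρ * B ^ 2 := by
          gcongr
          calc ‖N⁻¹ • ∑ k ∈ Finset.range n, G (y k)‖
              ≤ ‖N⁻¹ • ∑ k ∈ Finset.range n, g k‖
                + ‖N⁻¹ • ∑ k ∈ Finset.range n, G (y k)
                    - N⁻¹ • ∑ k ∈ Finset.range n, g k‖ := by
                have := norm_add_le (N⁻¹ • ∑ k ∈ Finset.range n, g k)
                  (N⁻¹ • ∑ k ∈ Finset.range n, G (y k) - N⁻¹ • ∑ k ∈ Finset.range n, g k)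
                simpa using this
            _ ≤ ‖N⁻¹ • ∑ k ∈ Finset.range n, g k‖ + Eμ := by gcongr
      _ ≤ (2 * Real.sqrt 2 * B / (K ^ 2 * η) + 2 * θ * B / (K * η)) + Eμ + 4 * ρ * B ^ 2 := by
          gcongr
  calc ‖G ystar‖ ≤ (2 * Real.sqrt 2 * B / (K ^ 2 * η) + 2 * θ * B / (K * η))
        + Eμ + 4 * ρ * B ^ 2 := hfinal
    _ ≤ 2 * ρ * B ^ 2 + 2 * Real.sqrt 2 * B / (K ^ 2 * η)
        + 2 * θ * B / (K * η) + Real.sqrt (2 * Eμ ^ 2 + 8 * ρ ^ 2 * B ^ 4) := by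
        linarith [habsorb]
end

section
/- Let θ ∈ (0,1), η > 0, and let μ < 0 be a real number satisfying η > (2/(2 − θ) − 1)/(−μ), equivalently (2 − θ)(1 − ημ) > 2. Then the discriminant (2 − θ)²(1 − ημ)² − 4(1 − θ)(1 − ημ) is nonnegative, and the real number λ = ((2 − θ)(1 − ημ) + √((2 − θ)²(1 − ημ)² − 4(1 − θ)(1 − ημ)))/2 satisfies λ > 1 and λ² − (2 − θ)(1 − ημ)·λ + (1 − θ)(1 − ημ) = 0. -/
/-- Instability of the accelerated gradient dynamics along a negative Hessian
eigendirection: if `η > (2/(2-θ) - 1)/(-μ)` (equivalently `(2-θ)(1-ημ) > 2`),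
then the quadratic factor of the characteristic polynomial has a real root
`λ > 1`. -/
theorem agd_unstable_eigenvalue (θ η μ : ℝ)
    (hθ0 : 0 < θ) (hθ1 : θ < 1) (hη : 0 < η) (hμ : μ < 0)
    (hcond : (2 / (2 - θ) - 1) / (-μ) < η) :
    (2 : ℝ) < (2 - θ) * (1 - η * μ) ∧
    0 ≤ (2 - θ) ^ 2 * (1 - η * μ) ^ 2 - 4 * (1 - θ) * (1 - η * μ) ∧
    (1 : ℝ) <
      ((2 - θ) * (1 - η * μ) +
        Real.sqrt ((2 - θ) ^ 2 * (1 - η * μ) ^ 2 - 4 * (1 - θ) * (1 - η * μ))) / 2 ∧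
    (((2 - θ) * (1 - η * μ) +
        Real.sqrt ((2 - θ) ^ 2 * (1 - η * μ) ^ 2 - 4 * (1 - θ) * (1 - η * μ))) / 2) ^ 2
      - (2 - θ) * (1 - η * μ) *
        (((2 - θ) * (1 - η * μ) +
          Real.sqrt ((2 - θ) ^ 2 * (1 - η * μ) ^ 2 - 4 * (1 - θ) * (1 - η * μ))) / 2)
      + (1 - θ) * (1 - η * μ) = 0 := by
  have h2θ : 0 < 2 - θ := by linarith
  have hμ' : 0 < -μ := by linarith
  -- from hcond : 2/(2-θ) - 1 < η * (-μ)
  have h1 : 2 / (2 - θ) - 1 < η * (-μ) := by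
    have := (div_lt_iff₀ hμ').mp hcond
    linarith
  have hs : 2 / (2 - θ) < 1 - η * μ := by linarith
  have hb : (2 : ℝ) < (2 - θ) * (1 - η * μ) := by
    have := (div_lt_iff₀ h2θ).mp hs
    linarith [this]
  have hs1 : (1 : ℝ) < 1 - η * μ := by nlinarith
  have hD : 0 ≤ (2 - θ) ^ 2 * (1 - η * μ) ^ 2 - 4 * (1 - θ) * (1 - η * μ) := by
    nlinarith [sq_nonneg θ, sq_nonneg (1 - η * μ)]
  refine ⟨hb, hD, ?_, ?_⟩
  · have := Real.sqrt_nonneg ((2 - θ) ^ 2 * (1 - η * μ) ^ 2 - 4 * (1 - θ) * (1 - η * μ))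
    linarith
  · have hsq := Real.sq_sqrt hD
    nlinarith [hsq]
end

section
/- Let d ≥ 1, l > 0, and let f : EuclideanSpace ℝ (Fin d) → ℝ be differentiable with gradient l-Lipschitz on the whole space and bounded below by f_low, i.e. f(x) ≥ f_low for all x. Let ε > 0 and μ > 0 satisfy l·μ·√d/2 ≤ ε/4, set η = 1/(4l), and define the sequence x_{t+1} = x_t − η·g(x_t; μ) from an arbitrary x₀, where g is the coordinate-wise zeroth-order estimator. Then for every natural number T with T·ε²/(64l) > f(x₀) − f_low, there exists t < T such that ‖∇f(x_t)‖ ≤ 3ε/4. -/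
open Metric

variable {d : ℕ} {f : EuclideanSpace ℝ (Fin d) → ℝ} {l : ℝ}

lemma line_hasDerivAt (hf : Differentiable ℝ f) (x v : EuclideanSpace ℝ (Fin d)) (t : ℝ) :
    HasDerivAt (fun t : ℝ => f (x + t • v))
      (inner ℝ (gradient f (x + t • v)) v : ℝ) t := by
  have h1 : HasDerivAt (fun t : ℝ => x + t • v) v t := by
    simpa using ((hasDerivAt_id t).smul_const v).const_add x
  have h2 := ((hf (x + t • v)).hasGradientAt.hasFDerivAt).comp_hasDerivAt t h1
  exact h2.congr_deriv (InnerProductSpace.toDual_apply_apply)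

lemma deriv_le_linear_bound {g g' : ℝ → ℝ} {C : ℝ}
    (hg : ∀ t, HasDerivAt g (g' t) t)
    (hb : ∀ t ∈ Set.Icc (0:ℝ) 1, g' t ≤ C * t) :
    g 1 - g 0 ≤ C / 2 := by
  set ψ : ℝ → ℝ := fun t => g t - C * t ^ 2 / 2 with hψdef
  have hψ : ∀ t, HasDerivAt ψ (g' t - C * t) t := by
    intro t
    have h2 : HasDerivAt (fun t : ℝ => C * t ^ 2 / 2) (C * t) t := by
      have := ((hasDerivAt_pow 2 t).const_mul C).div_const 2
      exact this.congr_deriv (by ring)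
    exact (hg t).sub h2
  have anti : AntitoneOn ψ (Set.Icc 0 1) := by
    apply antitoneOn_of_deriv_nonpos (convex_Icc 0 1)
    · exact fun t _ => (hψ t).differentiableAt.continuousAt.continuousWithinAt
    · exact fun t _ => (hψ t).differentiableAt.differentiableWithinAt
    · intro t ht
      rw [interior_Icc] at ht
      rw [(hψ t).deriv]
      have := hb t ⟨ht.1.le, ht.2.le⟩
      linarith
  have h01 := anti (Set.mem_Icc.2 ⟨le_refl 0, zero_le_one⟩)
      (Set.mem_Icc.2 ⟨zero_le_one, le_refl 1⟩) zero_le_one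
  simp only [hψdef] at h01
  norm_num at h01
  linarith

lemma quad_bound (hf : Differentiable ℝ f)
    (hlip : ∀ s t : EuclideanSpace ℝ (Fin d),
        ‖gradient f s - gradient f t‖ ≤ l * ‖s - t‖)
    (x v : EuclideanSpace ℝ (Fin d)) :
    |f (x + v) - f x - inner ℝ (gradient f x) v| ≤ l / 2 * ‖v‖ ^ 2 := by
  set c : ℝ := inner ℝ (gradient f x) v with hc
  have hb : ∀ t ∈ Set.Icc (0:ℝ) 1,
      |(inner ℝ (gradient f (x + t • v)) v : ℝ) - c| ≤ (l * ‖v‖ ^ 2) * t := by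
    intro t ht
    have heq : (inner ℝ (gradient f (x + t • v)) v : ℝ) - c
        = inner ℝ (gradient f (x + t • v) - gradient f x) v := by
      rw [inner_sub_left]
    rw [heq]
    calc |(inner ℝ (gradient f (x + t • v) - gradient f x) v : ℝ)|
        ≤ ‖gradient f (x + t • v) - gradient f x‖ * ‖v‖ := abs_real_inner_le_norm _ _
      _ ≤ (l * ‖x + t • v - x‖) * ‖v‖ := by
          apply mul_le_mul_of_nonneg_right (hlip _ _) (norm_nonneg v)
      _ = (l * ‖v‖ ^ 2) * t := by
          have : x + t • v - x = t • v := by abel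
          rw [this, norm_smul, Real.norm_eq_abs, abs_of_nonneg ht.1]
          ring
  have hup : f (x + v) - f x - c ≤ l / 2 * ‖v‖ ^ 2 := by
    have h := deriv_le_linear_bound
      (g := fun t : ℝ => f (x + t • v) - t * c)
      (g' := fun t : ℝ => (inner ℝ (gradient f (x + t • v)) v : ℝ) - c)
      (fun t => (line_hasDerivAt hf x v t).sub (hasDerivAt_mul_const c))
      (fun t ht => le_trans (le_abs_self _) (hb t ht))
    simp only [one_smul, zero_smul, add_zero, one_mul, zero_mul, sub_zero] at h
    linarith
  have hdown : -(f (x + v) - f x - c) ≤ l / 2 * ‖v‖ ^ 2 := by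
    have h := deriv_le_linear_bound
      (g := fun t : ℝ => t * c - f (x + t • v))
      (g' := fun t : ℝ => c - (inner ℝ (gradient f (x + t • v)) v : ℝ))
      (fun t => (hasDerivAt_mul_const c).sub (line_hasDerivAt hf x v t))
      (fun t ht => by
        refine le_trans (le_abs_self _) ?_
        rw [abs_sub_comm]
        exact hb t ht)
    simp only [one_smul, zero_smul, add_zero, one_mul, zero_mul, zero_sub] at h
    linarith
  rw [abs_le]
  constructor <;> linarith

lemma coord_err (hf : Differentiable ℝ f)
    (hlip : ∀ s t : EuclideanSpace ℝ (Fin d),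
        ‖gradient f s - gradient f t‖ ≤ l * ‖s - t‖)
    {μ : ℝ} (hμ : 0 < μ) (s : EuclideanSpace ℝ (Fin d)) (i : Fin d) :
    |(f (s + μ • EuclideanSpace.single i (1:ℝ)) -
        f (s - μ • EuclideanSpace.single i (1:ℝ))) / (2*μ) - gradient f s i|
      ≤ l * μ / 2 := by
  have hA := quad_bound hf hlip s (μ • EuclideanSpace.single i (1:ℝ))
  have hB := quad_bound hf hlip s ((-μ) • EuclideanSpace.single i (1:ℝ))
  have hnorm : ‖μ • EuclideanSpace.single i (1:ℝ)‖ = μ := by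
    rw [norm_smul]; simp [abs_of_pos hμ]
  have hnorm' : ‖(-μ) • EuclideanSpace.single i (1:ℝ)‖ = μ := by
    rw [norm_smul]; simp [abs_of_pos hμ]
  have hip : (inner ℝ (gradient f s) (μ • EuclideanSpace.single i (1:ℝ)) : ℝ)
      = μ * gradient f s i := by
    rw [real_inner_smul_right, EuclideanSpace.inner_single_right]; simp
  have hip' : (inner ℝ (gradient f s) ((-μ) • EuclideanSpace.single i (1:ℝ)) : ℝ)
      = -μ * gradient f s i := by
    rw [real_inner_smul_right, EuclideanSpace.inner_single_right]; simp
  have hpt : s + (-μ) • EuclideanSpace.single i (1:ℝ)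
      = s - μ • EuclideanSpace.single i (1:ℝ) := by
    rw [neg_smul, ← sub_eq_add_neg]
  rw [hnorm, hip] at hA
  rw [hpt, hnorm', hip'] at hB
  set A := f (s + μ • EuclideanSpace.single i (1:ℝ)) with hAdef
  set B := f (s - μ • EuclideanSpace.single i (1:ℝ)) with hBdef
  set G := gradient f s i with hGdef
  have h2μ : (0:ℝ) < 2 * μ := by linarith
  have key : (A - B) / (2*μ) - G
      = ((A - f s - μ * G) - (B - f s - (-μ) * G)) / (2*μ) := by
    field_simp; ring
  rw [key, abs_div, abs_of_pos h2μ, div_le_iff₀ h2μ]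
  have htri : |(A - f s - μ * G) - (B - f s - (-μ) * G)|
      ≤ |A - f s - μ * G| + |B - f s - (-μ) * G| := abs_sub _ _
  have : l * μ / 2 * (2 * μ) = l / 2 * μ^2 + l / 2 * μ^2 := by ring
  rw [this]
  calc |(A - f s - μ * G) - (B - f s - (-μ) * G)|
      ≤ |A - f s - μ * G| + |B - f s - (-μ) * G| := htri
    _ ≤ l / 2 * μ^2 + l / 2 * μ^2 := by linarith

lemma zo_err (hf : Differentiable ℝ f) (hl0 : 0 ≤ l)
    (hlip : ∀ s t : EuclideanSpace ℝ (Fin d),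
        ‖gradient f s - gradient f t‖ ≤ l * ‖s - t‖)
    {μ : ℝ} (hμ : 0 < μ) (s : EuclideanSpace ℝ (Fin d)) :
    ‖zoEstimator f μ s - gradient f s‖ ≤ l * μ * Real.sqrt d / 2 := by
  have happ : ∀ i : Fin d, (zoEstimator f μ s) i
      = (f (s + μ • EuclideanSpace.single i (1:ℝ)) -
          f (s - μ • EuclideanSpace.single i (1:ℝ))) / (2*μ) := by
    intro i
    have := map_sum (EuclideanSpace.proj (𝕜 := ℝ) i) (fun j : Fin d =>
      ((f (s + μ • EuclideanSpace.single j (1:ℝ)) -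
          f (s - μ • EuclideanSpace.single j (1:ℝ))) / (2*μ)) •
        EuclideanSpace.single j (1:ℝ)) Finset.univ
    have h2 : ∀ v : EuclideanSpace ℝ (Fin d), EuclideanSpace.proj (𝕜 := ℝ) i v = v i :=
      fun _ => rfl
    simp only [map_smul, smul_eq_mul, h2] at this
    rw [zoEstimator, this, Finset.sum_eq_single i]
    · simp [PiLp.smul_apply]
    · intro j _ hj
      simp [PiLp.smul_apply, EuclideanSpace.single_apply, Ne.symm hj]
    · simp
  have hcoord : ∀ i : Fin d, |(zoEstimator f μ s - gradient f s) i| ≤ l * μ / 2 := by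
    intro i
    rw [PiLp.sub_apply, happ i]
    exact coord_err hf hlip hμ s i
  rw [EuclideanSpace.norm_eq]
  have hsum : (∑ i, ‖(zoEstimator f μ s - gradient f s) i‖ ^ 2)
      ≤ (d : ℝ) * (l * μ / 2) ^ 2 := by
    calc (∑ i, ‖(zoEstimator f μ s - gradient f s) i‖ ^ 2)
        ≤ ∑ _i : Fin d, (l * μ / 2) ^ 2 := by
          apply Finset.sum_le_sum
          intro i _
          rw [Real.norm_eq_abs]
          exact pow_le_pow_left₀ (abs_nonneg _) (hcoord i) 2
      _ = (d : ℝ) * (l * μ / 2) ^ 2 := by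
          rw [Finset.sum_const, Finset.card_univ, Fintype.card_fin, nsmul_eq_mul]
  calc Real.sqrt (∑ i, ‖(zoEstimator f μ s - gradient f s) i‖ ^ 2)
      ≤ Real.sqrt ((d : ℝ) * (l * μ / 2) ^ 2) := Real.sqrt_le_sqrt hsum
    _ = Real.sqrt d * (l * μ / 2) := by
        rw [Real.sqrt_mul (Nat.cast_nonneg d), Real.sqrt_sq (by positivity)]
    _ = l * μ * Real.sqrt d / 2 := by ring


/-- Complexity of Euclidean zeroth-order gradient descent: with stepsize
`η = 1/(4l)` and smoothing parameter `μ` satisfying `lμ√d/2 ≤ ε/4`, after any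
number `T` of iterations with `T ε²/(64 l) > f(x₀) - f_low`, some iterate
`x_t` with `t < T` satisfies `‖∇f(x_t)‖ ≤ 3ε/4`. -/
theorem zo_gd_complexity {d : ℕ} (hd : 1 ≤ d) (l : ℝ) (hl : 0 < l)
    (f : EuclideanSpace ℝ (Fin d) → ℝ) (hf : Differentiable ℝ f)
    (hlip : ∀ s t : EuclideanSpace ℝ (Fin d),
        ‖gradient f s - gradient f t‖ ≤ l * ‖s - t‖)
    (flow : ℝ) (hlow : ∀ x, flow ≤ f x)
    (ε μ : ℝ) (hε : 0 < ε) (hμ : 0 < μ)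
    (hμε : l * μ * Real.sqrt d / 2 ≤ ε / 4)
    (η : ℝ) (hη : η = 1 / (4 * l))
    (x : ℕ → EuclideanSpace ℝ (Fin d))
    (hiter : ∀ t, x (t + 1) = x t - η • zoEstimator f μ (x t))
    (T : ℕ) (hT : f (x 0) - flow < T * ε ^ 2 / (64 * l)) :
    ∃ t < T, ‖gradient f (x t)‖ ≤ 3 * ε / 4 := by

  by_contra hcon
  push_neg at hcon
  have hη0 : 0 < η := by rw [hη]; positivity
  have herr : ∀ t, ‖zoEstimator f μ (x t) - gradient f (x t)‖ ≤ ε / 4 :=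
    fun t => le_trans (zo_err hf hl.le hlip hμ (x t)) hμε
  have dec : ∀ t < T, f (x (t + 1)) ≤ f (x t) - ε ^ 2 / (64 * l) := by
    intro t ht
    set g := zoEstimator f μ (x t) with hg
    set G := gradient f (x t) with hG
    set a := ‖g‖ with ha'
    set b := ‖g - G‖ with hb'
    have hb : b ≤ ε / 4 := herr t
    have hb0 : (0:ℝ) ≤ b := norm_nonneg _
    have ha0 : (0:ℝ) ≤ a := norm_nonneg _
    have haG : 3 * ε / 4 < ‖G‖ := hcon t ht
    have ha : ε / 2 ≤ a := by
      have h := norm_sub_norm_le G g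
      rw [norm_sub_rev] at h
      linarith
    have hquad := quad_bound hf hlip (x t) ((-η) • g)
    have hpt : x t + (-η) • g = x (t + 1) := by
      rw [hiter t, neg_smul, ← sub_eq_add_neg]
    have hnorm2 : ‖(-η) • g‖ ^ 2 = η ^ 2 * a ^ 2 := by
      rw [norm_smul, Real.norm_eq_abs, abs_neg, abs_of_pos hη0]; ring
    have hip : (inner ℝ G ((-η) • g) : ℝ) = -(η * inner ℝ G g) := by
      rw [real_inner_smul_right]; ring
    have hGg : a ^ 2 - b * a ≤ (inner ℝ G g : ℝ) := by
      have h1 : (inner ℝ G g : ℝ) = inner ℝ g g + (inner ℝ (G - g) g : ℝ) := by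
        rw [← inner_add_left]; norm_num
      have h2 : (inner ℝ g g : ℝ) = a ^ 2 := real_inner_self_eq_norm_sq g
      have h3 : |(inner ℝ (G - g) g : ℝ)| ≤ ‖G - g‖ * ‖g‖ := abs_real_inner_le_norm _ _
      rw [norm_sub_rev] at h3
      have h4 := neg_abs_le (inner ℝ (G - g) g : ℝ)
      linarith
    have hupper := (abs_le.1 hquad).2
    rw [hpt, hnorm2, hip] at hupper
    have hkey : ε ^ 2 / (64 * l) ≤ η * (a ^ 2 - b * a) - l / 2 * (η ^ 2 * a ^ 2) := by
      rw [hη]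
      have hfactor : 1 / (4 * l) * (a ^ 2 - b * a) - l / 2 * ((1 / (4 * l)) ^ 2 * a ^ 2)
          - ε ^ 2 / (64 * l) = (14 * a ^ 2 - 16 * (b * a) - ε ^ 2) / (64 * l) := by
        field_simp
        ring
      have hpoly : 0 ≤ 14 * a ^ 2 - 16 * (b * a) - ε ^ 2 := by
        nlinarith [mul_le_mul_of_nonneg_right hb ha0, sq_nonneg (a - ε / 2),
          mul_le_mul_of_nonneg_left ha hε.le]
      have hnn := div_nonneg hpoly (by positivity : (0:ℝ) ≤ 64 * l)
      linarith [hfactor ▸ hnn]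
    have hmul : η * (a ^ 2 - b * a) ≤ η * (inner ℝ G g : ℝ) :=
      mul_le_mul_of_nonneg_left hGg hη0.le
    linarith
  have bound : ∀ t ≤ T, f (x t) ≤ f (x 0) - t * (ε ^ 2 / (64 * l)) := by
    intro t
    induction t with
    | zero => intro _; simp
    | succ n ih =>
      intro hn
      have hnT : n < T := Nat.lt_of_succ_le hn
      have h1 := dec n hnT
      have h2 := ih hnT.le
      push_cast
      linarith
  have hfinal := bound T le_rfl
  have hflow := hlow (x T)
  have hcast : (T : ℝ) * ε ^ 2 / (64 * l) = T * (ε ^ 2 / (64 * l)) := by ring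
  rw [hcast] at hT
  linarith
end
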